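/- arXiv:1701.06301 — 5 statements merged into one kernel-verified Lean document; each statement's English description precedes it below -/
import Mathlib

section
/- Let G be a finite simple graph such that for every vertex v of G, the set of neighbours of v has chromatic number at most τ, and let C be a shortest odd hole in G. Then the set of C-minor vertices of type zero induces a subgraph with chromatic number at most 5τ. -/
variable {V : Type*}

/-- `f : ZMod n → V` describes a hole (induced cycle of length at least 4) in `G`:
the vertices are `f 0, f 1, …, f (n-1)` in cyclic order, and the only adjacencies
among them are between cyclically consecutive ones. -/
def IsHole (G : SimpleGraph V) (n : ℕ) (f : ZMod n → V) : Prop :=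
  4 ≤ n ∧ Function.Injective f ∧
    ∀ i j : ZMod n, G.Adj (f i) (f j) ↔ (j = i + 1 ∨ i = j + 1)

/-- An odd hole: a hole of odd length. -/
def IsOddHole (G : SimpleGraph V) (n : ℕ) (f : ZMod n → V) : Prop :=
  IsHole G n f ∧ Odd n

/-- A shortest odd hole: an odd hole of minimum length among all odd holes of `G`. -/
def IsShortestOddHole (G : SimpleGraph V) (n : ℕ) (f : ZMod n → V) : Prop :=
  IsOddHole G n f ∧ ∀ (m : ℕ) (g : ZMod m → V), IsOddHole G m g → n ≤ m

/-- `N(C)`: the set of vertices outside the hole `C` with at least one neighbour in `V(C)`. -/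
def holeNbrs (G : SimpleGraph V) (n : ℕ) (f : ZMod n → V) : Set V :=
  {v | v ∉ Set.range f ∧ ∃ i : ZMod n, G.Adj v (f i)}

/-- A vertex of `N(C)` is `C`-minor if all its neighbours in `V(C)` lie on a path
of `C` of length two. -/
def IsCMinor (G : SimpleGraph V) (n : ℕ) (f : ZMod n → V) (v : V) : Prop :=
  v ∈ holeNbrs G n f ∧
    ∃ i : ZMod n, ∀ j : ZMod n, G.Adj v (f j) → j = i ∨ j = i + 1 ∨ j = i + 2

/-- A vertex of `N(C)` is `C`-major if it is not `C`-minor. -/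
def IsCMajor (G : SimpleGraph V) (n : ℕ) (f : ZMod n → V) (v : V) : Prop :=
  v ∈ holeNbrs G n f ∧
    ¬ ∃ i : ZMod n, ∀ j : ZMod n, G.Adj v (f j) → j = i ∨ j = i + 1 ∨ j = i + 2

/-- A `C`-minor vertex has type zero if its neighbours in `V(C)` span a path
of length zero, i.e. it has a unique neighbour in `V(C)`. -/
def IsCMinorTypeZero (G : SimpleGraph V) (n : ℕ) (f : ZMod n → V) (v : V) : Prop :=
  IsCMinor G n f v ∧ ∃ i : ZMod n, ∀ j : ZMod n, G.Adj v (f j) ↔ j = i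

/-- A `C`-minor vertex has type one if the minimal path of `C` containing
its neighbours in `V(C)` has length one. -/
def IsCMinorTypeOne (G : SimpleGraph V) (n : ℕ) (f : ZMod n → V) (v : V) : Prop :=
  IsCMinor G n f v ∧ ∃ i : ZMod n, G.Adj v (f i) ∧ G.Adj v (f (i + 1)) ∧
    ∀ j : ZMod n, G.Adj v (f j) → j = i ∨ j = i + 1

/-- A `C`-minor vertex has type two if the minimal path of `C` containing
its neighbours in `V(C)` has length two. -/
def IsCMinorTypeTwo (G : SimpleGraph V) (n : ℕ) (f : ZMod n → V) (v : V) : Prop :=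
  IsCMinor G n f v ∧ ∃ i : ZMod n, G.Adj v (f i) ∧ G.Adj v (f (i + 2)) ∧
    ∀ j : ZMod n, G.Adj v (f j) → j = i ∨ j = i + 1 ∨ j = i + 2

/-- Two `C`-major vertices `u, v` form a skew pair: they are nonadjacent, each has
exactly three neighbours in `V(C)`, and there is an odd path of `C` with vertices
`c₁, …, cₘ` in order (`m ≥ 6`, so `m` is even) such that `u` is adjacent to
`c₁, c₂, c_{m-2}` and `v` is adjacent to `c₃, c_{m-1}, cₘ`. -/
def IsSkewPair (G : SimpleGraph V) (n : ℕ) (f : ZMod n → V) (u v : V) : Prop :=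
  IsCMajor G n f u ∧ IsCMajor G n f v ∧ ¬ G.Adj u v ∧
  {i : ZMod n | G.Adj u (f i)}.ncard = 3 ∧ {i : ZMod n | G.Adj v (f i)}.ncard = 3 ∧
  ∃ (m : ℕ) (i : ZMod n), 6 ≤ m ∧ Even m ∧ m ≤ n ∧
    G.Adj u (f i) ∧ G.Adj u (f (i + 1)) ∧ G.Adj u (f (i + ((m - 3 : ℕ) : ZMod n))) ∧
    G.Adj v (f (i + 2)) ∧ G.Adj v (f (i + ((m - 2 : ℕ) : ZMod n))) ∧
    G.Adj v (f (i + ((m - 1 : ℕ) : ZMod n)))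

/-- `Y` dominates `X` if every vertex of `X` belongs to `Y` or has a neighbour in `Y`. -/
def Dominates (G : SimpleGraph V) (Y X : Set V) : Prop :=
  ∀ x ∈ X, x ∈ Y ∨ ∃ y ∈ Y, G.Adj x y

/-- For a cycle with vertices `0, 1, …, n-1` (as `ZMod n`) in cyclic order and
`A ⊆ ZMod n`, the path `i, i+1, …, i+k` is an `A`-gap: its interior is a component
of the cycle minus `A`, and its ends lie in `A`. -/
def IsGap (n : ℕ) (A : Set (ZMod n)) (i : ZMod n) (k : ℕ) : Prop :=
  2 ≤ k ∧ k ≤ n ∧ i ∈ A ∧ i + (k : ZMod n) ∈ A ∧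
    ∀ m : ℕ, 0 < m → m < k → i + (m : ZMod n) ∉ A

/-- `A` is normal in the cycle on `ZMod n` if every `A`-gap is even.  (If `A = ∅`,
the unique `A`-gap is the whole cycle, of length `n`.) -/
def IsNormal (n : ℕ) (A : Set (ZMod n)) : Prop :=
  (A = ∅ → Even n) ∧ ∀ (i : ZMod n) (k : ℕ), IsGap n A i k → Even k

/-- The path `i, i+1, …, i+k` of the cycle on `ZMod n` is an `(A,B)`-gap: one of its
ends is its unique vertex in `A` and the other end is its unique vertex in `B`
(possibly the two ends coincide and the path has length `0`). -/
def IsABGap (n : ℕ) (A B : Set (ZMod n)) (i : ZMod n) (k : ℕ) : Prop :=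
  k < n ∧
  ((i ∈ A ∧ i + (k : ZMod n) ∈ B ∧
      (∀ m : ℕ, m ≤ k → i + (m : ZMod n) ∈ A → m = 0) ∧
      (∀ m : ℕ, m ≤ k → i + (m : ZMod n) ∈ B → m = k)) ∨
    (i ∈ B ∧ i + (k : ZMod n) ∈ A ∧
      (∀ m : ℕ, m ≤ k → i + (m : ZMod n) ∈ B → m = 0) ∧
      (∀ m : ℕ, m ≤ k → i + (m : ZMod n) ∈ A → m = k)))

/-- The vertex set of the path `i, i+1, …, i+k` of the cycle on `ZMod n`. -/
def gapVerts (n : ℕ) (i : ZMod n) (k : ℕ) : Set (ZMod n) :=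
  {x | ∃ m : ℕ, m ≤ k ∧ x = i + (m : ZMod n)}

/-- The independence (stability) number: the clique number of the complement. -/
noncomputable def indepNum (G : SimpleGraph V) : ℕ := Gᶜ.cliqueNum


lemma circColoring (n : ℕ) (hn : n % 2 = 1) (h5 : 5 ≤ n) :
    ∃ c : ZMod n → Fin 5, (∀ i, c i ≠ c (i + 1)) ∧ (∀ i, c i ≠ c (i + 3)) := by
  haveI : NeZero n := ⟨by omega⟩
  haveI : Fact (1 < n) := ⟨by omega⟩
  set col : ℕ → ℕ := fun v => if v < n - 3 then v % 2 else v - (n - 3) + 2 with hcol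
  have hlt : ∀ v : ℕ, v < n → col v < 5 := by
    intro v hv; simp only [hcol]; split_ifs <;> omega
  refine ⟨fun i => ⟨col i.val, hlt _ i.val_lt⟩, ?_, ?_⟩
  · intro i h
    have h' : col i.val = col (i+1).val := congrArg Fin.val h
    have hv := ZMod.val_lt i
    have h1 : (i+1).val = (i.val + 1) % n := by
      rw [ZMod.val_add, ZMod.val_one]
    have hw : (i.val + 1) % n = if i.val + 1 < n then i.val + 1 else 0 := by
      split_ifs with hc
      · exact Nat.mod_eq_of_lt hc
      · have : i.val + 1 = n := by omega
        rw [this, Nat.mod_self]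
    rw [h1, hw] at h'
    simp only [hcol] at h'
    split_ifs at h' <;> omega
  · intro i h
    have h' : col i.val = col (i+3).val := congrArg Fin.val h
    have hv := ZMod.val_lt i
    have h3 : (i+3).val = (i.val + 3) % n := by
      have : ((3:ℕ) : ZMod n) = (3 : ZMod n) := by push_cast; ring
      rw [ZMod.val_add, ← this, ZMod.val_cast_of_lt (by omega)]
    have hw : (i.val + 3) % n = if i.val + 3 < n then i.val + 3 else i.val + 3 - n := by
      split_ifs with hc
      · exact Nat.mod_eq_of_lt hc
      · rw [Nat.mod_eq_sub_mod (by omega), Nat.mod_eq_of_lt (by omega)]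
    rw [h3, hw] at h'
    simp only [hcol] at h'
    split_ifs at h' <;> omega
lemma aux_hole {V : Type} (G : SimpleGraph V) {n : ℕ} {f : ZMod n → V}
    (hC : IsShortestOddHole G n f) {u v : V} {i j : ZMod n}
    (huv : G.Adj u v)
    (hu0 : u ∉ Set.range f) (hu : ∀ k, G.Adj u (f k) ↔ k = i)
    (hv0 : v ∉ Set.range f) (hv : ∀ k, G.Adj v (f k) ↔ k = j)
    (hdE : Even (j - i).val) (hd0 : (j - i).val ≠ 0) : n ≤ (j - i).val + 3 := by
  by_contra hcon
  push_neg at hcon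
  obtain ⟨⟨⟨hn4, finj, hadj⟩, hodd⟩, hmin⟩ := hC
  haveI : NeZero n := ⟨by omega⟩
  set d := (j - i).val with hd
  have hdlt : d < n := ZMod.val_lt _
  have hd2 : 2 ≤ d := by obtain ⟨r, hr⟩ := hdE; omega
  have hnodd : n % 2 = 1 := Nat.odd_iff.mp hodd
  have hdE' : d % 2 = 0 := Nat.even_iff.mp hdE
  set m := d + 3 with hm
  haveI : NeZero m := ⟨by omega⟩
  haveI : Fact (1 < m) := ⟨by omega⟩
  haveI : Fact (1 < n) := ⟨by omega⟩
  have hji : j = i + (d : ZMod n) := by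
    rw [hd, ZMod.natCast_rightInverse (j - i)]; ring
  have hcast : ∀ p q : ℕ, p < n → q < n → (((p : ZMod n) = (q : ZMod n)) ↔ p = q) := by
    intro p q hp hq
    rw [ZMod.natCast_eq_natCast_iff, Nat.ModEq, Nat.mod_eq_of_lt hp, Nat.mod_eq_of_lt hq]
  set g : ZMod m → V :=
    fun k => if k.val ≤ d then f (i + (k.val : ZMod n)) else if k.val = d + 1 then v else u
    with hg
  have hgbody : ∀ a : ZMod m, a.val ≤ d → g a = f (i + (a.val : ZMod n)) := by
    intro a ha; simp only [hg]; rw [if_pos ha]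
  have hgv : ∀ a : ZMod m, a.val = d + 1 → g a = v := by
    intro a ha; simp only [hg]; rw [if_neg (by omega), if_pos ha]
  have hgu : ∀ a : ZMod m, a.val = d + 2 → g a = u := by
    intro a ha; simp only [hg]; rw [if_neg (by omega), if_neg (by omega)]
  have hbody : ∀ p q : ℕ, p ≤ d → q ≤ d →
      (f (i + (p : ZMod n)) = f (i + (q : ZMod n)) ↔ p = q) := by
    intro p q hp hq
    constructor
    · intro h
      have h2 := add_left_cancel (finj h)
      exact (hcast p q (by omega) (by omega)).mp h2
    · rintro rfl; rfl
  have hbadj : ∀ p q : ℕ, p ≤ d → q ≤ d →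
      (G.Adj (f (i + (p : ZMod n))) (f (i + (q : ZMod n))) ↔ (q = p + 1 ∨ p = q + 1)) := by
    intro p q hp hq
    rw [hadj]
    have e1 : (i + (q : ZMod n) = i + (p : ZMod n) + 1) ↔ q = p + 1 := by
      rw [add_assoc, add_right_inj]
      have hc : ((p : ZMod n) + 1) = ((p + 1 : ℕ) : ZMod n) := by push_cast; ring
      rw [hc, hcast q (p + 1) (by omega) (by omega)]
    have e2 : (i + (p : ZMod n) = i + (q : ZMod n) + 1) ↔ p = q + 1 := by
      rw [add_assoc, add_right_inj]
      have hc : ((q : ZMod n) + 1) = ((q + 1 : ℕ) : ZMod n) := by push_cast; ring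
      rw [hc, hcast p (q + 1) (by omega) (by omega)]
    rw [e1, e2]
  have huadj : ∀ p : ℕ, p ≤ d → (G.Adj u (f (i + (p : ZMod n))) ↔ p = 0) := by
    intro p hp
    rw [hu]
    rw [add_eq_left]
    simpa using hcast p 0 (by omega) (by omega)
  have hvadj : ∀ p : ℕ, p ≤ d → (G.Adj v (f (i + (p : ZMod n))) ↔ p = d) := by
    intro p hp
    rw [hv, hji, add_right_inj]
    exact hcast p d (by omega) (by omega)
  have hsucc : ∀ a b : ZMod m, b = a + 1 ↔ (b.val = a.val + 1 ∨ (a.val = m - 1 ∧ b.val = 0)) := by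
    intro a b
    have hpa := ZMod.val_lt a
    have hpb := ZMod.val_lt b
    constructor
    · rintro rfl
      rw [ZMod.val_add, ZMod.val_one]
      rcases Nat.lt_or_ge (a.val + 1) m with hc | hc
      · left; exact Nat.mod_eq_of_lt hc
      · right
        refine ⟨by omega, ?_⟩
        rw [show a.val + 1 = m by omega, Nat.mod_self]
    · intro h
      refine ZMod.val_injective m ?_
      rw [ZMod.val_add, ZMod.val_one]
      rcases h with h | ⟨h1, h2⟩
      · rw [Nat.mod_eq_of_lt (by omega)]; omega
      · rw [h2, h1, Nat.sub_add_cancel (by omega), Nat.mod_self]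
  have ginj : Function.Injective g := by
    intro a b hab
    have hpa := ZMod.val_lt a
    have hpb := ZMod.val_lt b
    refine ZMod.val_injective m ?_
    rcases (show a.val ≤ d ∨ a.val = d + 1 ∨ a.val = d + 2 by omega) with ha | ha | ha <;>
      rcases (show b.val ≤ d ∨ b.val = d + 1 ∨ b.val = d + 2 by omega) with hb | hb | hb
    · rw [hgbody a ha, hgbody b hb] at hab
      have := (hbody _ _ ha hb).mp hab; omega
    · rw [hgbody a ha, hgv b hb] at hab; exact absurd ⟨_, hab⟩ hv0
    · rw [hgbody a ha, hgu b hb] at hab; exact absurd ⟨_, hab⟩ hu0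
    · rw [hgbody b hb, hgv a ha] at hab; exact absurd ⟨_, hab.symm⟩ hv0
    · omega
    · rw [hgv a ha, hgu b hb] at hab; exact absurd hab.symm huv.ne
    · rw [hgbody b hb, hgu a ha] at hab; exact absurd ⟨_, hab.symm⟩ hu0
    · rw [hgv b hb, hgu a ha] at hab; exact absurd hab huv.ne
    · omega
  have key : ∀ a b : ZMod m, G.Adj (g a) (g b) ↔ (b = a + 1 ∨ a = b + 1) := by
    intro a b
    rw [hsucc a b, hsucc b a]
    have hpa := ZMod.val_lt a
    have hpb := ZMod.val_lt b
    rcases (show a.val ≤ d ∨ a.val = d + 1 ∨ a.val = d + 2 by omega) with ha | ha | ha <;>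
      rcases (show b.val ≤ d ∨ b.val = d + 1 ∨ b.val = d + 2 by omega) with hb | hb | hb
    · rw [hgbody a ha, hgbody b hb, hbadj _ _ ha hb]; omega
    · rw [hgbody a ha, hgv b hb, G.adj_comm, hvadj _ ha]; omega
    · rw [hgbody a ha, hgu b hb, G.adj_comm, huadj _ ha]; omega
    · rw [hgv a ha, hgbody b hb, hvadj _ hb]; omega
    · rw [hgv a ha, hgv b hb]; exact iff_of_false (G.irrefl) (by omega)
    · rw [hgv a ha, hgu b hb]; exact iff_of_true huv.symm (by omega)
    · rw [hgu a ha, hgbody b hb, huadj _ hb]; omega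
    · rw [hgu a ha, hgv b hb]; exact iff_of_true huv (by omega)
    · rw [hgu a ha, hgu b hb]; exact iff_of_false (G.irrefl) (by omega)
  have hhole : IsOddHole G m g := ⟨⟨by omega, ginj, key⟩, by rw [Nat.odd_iff]; omega⟩
  have := hmin m g hhole
  omega
lemma att_diff {V : Type} (G : SimpleGraph V) {n : ℕ} {f : ZMod n → V}
    (hC : IsShortestOddHole G n f) {u v : V} {i j : ZMod n}
    (huv : G.Adj u v)
    (hu0 : u ∉ Set.range f) (hu : ∀ k, G.Adj u (f k) ↔ k = i)
    (hv0 : v ∉ Set.range f) (hv : ∀ k, G.Adj v (f k) ↔ k = j)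
    (hij : i ≠ j) :
    j = i + 1 ∨ i = j + 1 ∨ j = i + 3 ∨ i = j + 3 := by
  have hn4 : 4 ≤ n := hC.1.1.1
  haveI : NeZero n := ⟨by omega⟩
  have hnodd : n % 2 = 1 := Nat.odd_iff.mp hC.1.2
  have hne : j - i ≠ 0 := fun h => hij (by linear_combination -h)
  have hd0 : (j - i).val ≠ 0 := fun h => hne ((ZMod.val_eq_zero _).mp h)
  have hdlt := ZMod.val_lt (j - i)
  have hdpos : 0 < (j - i).val := Nat.pos_of_ne_zero hd0
  have hc3 : ((n - 3 : ℕ) : ZMod n) = -3 := by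
    rw [Nat.cast_sub (by omega)]; simp
  have hc1 : ((n - 1 : ℕ) : ZMod n) = -1 := by
    rw [Nat.cast_sub (by omega)]; simp
  rcases Nat.even_or_odd (j - i).val with hE | hO
  · have h3 := aux_hole G hC huv hu0 hu hv0 hv hE hd0
    have hval : j - i = (((j - i).val : ℕ) : ZMod n) := (ZMod.natCast_rightInverse _).symm
    have hEE := Nat.even_iff.mp hE
    rcases (show (j - i).val = n - 3 ∨ (j - i).val = n - 1 by omega) with h | h
    · right; right; right
      have hji : j - i = -3 := by rw [hval, h, hc3]
      linear_combination -hji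
    · right; left
      have hji : j - i = -1 := by rw [hval, h, hc1]
      linear_combination -hji
  · have hneg : (i - j).val = n - (j - i).val := by
      rw [show i - j = -(j - i) by ring, ZMod.neg_val, if_neg hne]
    have hE' : Even (i - j).val := by
      rw [Nat.even_iff, hneg]
      have := Nat.odd_iff.mp hO
      omega
    have hd0' : (i - j).val ≠ 0 := by omega
    have h3 := aux_hole G hC huv.symm hv0 hv hu0 hu hE' hd0'
    have hval : i - j = (((i - j).val : ℕ) : ZMod n) := (ZMod.natCast_rightInverse _).symm
    have hEE := Nat.even_iff.mp hE'
    rcases (show (i - j).val = n - 3 ∨ (i - j).val = n - 1 by omega) with h | h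
    · right; right; left
      have hji : i - j = -3 := by rw [hval, h, hc3]
      linear_combination -hji
    · left
      have hji : i - j = -1 := by rw [hval, h, hc1]
      linear_combination -hji
/-- if every vertex of `G` has neighbourhood of chromatic number at most
`τ` and `C` is a shortest odd hole in `G`, then the set of `C`-minor vertices of type
zero induces a subgraph with chromatic number at most `5τ`. -/
theorem chromaticNumber_typeZero_le {V : Type} [Fintype V] (G : SimpleGraph V) (τ : ℕ)
    (hτ : ∀ v : V, (G.induce (G.neighborSet v)).chromaticNumber ≤ (τ : ℕ∞))
    (n : ℕ) (f : ZMod n → V) (hC : IsShortestOddHole G n f) :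
    (G.induce {v : V | IsCMinorTypeZero G n f v}).chromaticNumber ≤ ((5 * τ : ℕ) : ℕ∞) := by
  classical
  have hn4 : 4 ≤ n := hC.1.1.1
  have hnodd : n % 2 = 1 := Nat.odd_iff.mp hC.1.2
  haveI : NeZero n := ⟨by omega⟩
  rcases Nat.eq_zero_or_pos τ with rfl | hτpos
  · exfalso
    have h01 : G.Adj (f 0) (f 1) := (hC.1.1.2.2 0 1).mpr (Or.inl (by ring))
    have hmem : f 1 ∈ G.neighborSet (f 0) := h01
    have hcol : (G.induce (G.neighborSet (f 0))).Colorable 0 :=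
      SimpleGraph.chromaticNumber_le_iff_colorable.mp (by exact_mod_cast hτ (f 0))
    obtain ⟨co⟩ := hcol
    exact (co ⟨f 1, hmem⟩).elim0
  obtain ⟨c, hc1, hc3⟩ := circColoring n hnodd (by omega)
  have hcol : ∀ x : V, (G.induce (G.neighborSet x)).Colorable τ :=
    fun x => SimpleGraph.chromaticNumber_le_iff_colorable.mp (hτ x)
  have gc : ∀ x : V, (G.induce (G.neighborSet x)).Coloring (Fin τ) := fun x => (hcol x).some
  set S : Set V := {v : V | IsCMinorTypeZero G n f v} with hS
  have hattex : ∀ w : V, ∃ i : ZMod n, w ∈ S → ∀ k, G.Adj w (f k) ↔ k = i := by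
    intro w
    by_cases hw : w ∈ S
    · obtain ⟨i, hi⟩ := hw.2
      exact ⟨i, fun _ => hi⟩
    · exact ⟨0, fun h => absurd h hw⟩
  choose att hatt using hattex
  set pt : ZMod n → V → Fin τ :=
    fun i w => if h : G.Adj (f i) w then gc (f i) ⟨w, h⟩ else ⟨0, hτpos⟩ with hpt
  have col : (G.induce S).Coloring (Fin 5 × Fin τ) := by
    refine SimpleGraph.Coloring.mk (fun w => (c (att w.1), pt (att w.1) w.1)) ?_
    intro a b hab hFab
    have hab' : G.Adj a.1 b.1 := hab
    have hfst : c (att a.1) = c (att b.1) := congrArg Prod.fst hFab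
    have hsnd : pt (att a.1) a.1 = pt (att b.1) b.1 := congrArg Prod.snd hFab
    by_cases hij : att a.1 = att b.1
    · have h1 : G.Adj (f (att a.1)) a.1 := ((hatt a.1 a.2 _).mpr rfl).symm
      have h2 : G.Adj (f (att a.1)) b.1 := by
        rw [hij]; exact ((hatt b.1 b.2 _).mpr rfl).symm
      rw [← hij] at hsnd
      have hne : pt (att a.1) a.1 ≠ pt (att a.1) b.1 := by
        simp only [hpt]
        rw [dif_pos h1, dif_pos h2]
        have hadj2 : (G.induce (G.neighborSet (f (att a.1)))).Adj ⟨a.1, h1⟩ ⟨b.1, h2⟩ := hab'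
        exact (gc _).valid hadj2
      exact hne hsnd
    · have hd := att_diff G hC hab' a.2.1.1.1 (hatt a.1 a.2) b.2.1.1.1 (hatt b.1 b.2) hij
      rcases hd with h | h | h | h
      · rw [h] at hfst; exact hc1 _ hfst
      · rw [h] at hfst; exact hc1 _ hfst.symm
      · rw [h] at hfst; exact hc3 _ hfst
      · rw [h] at hfst; exact hc3 _ hfst.symm
  have hcolorable : (G.induce S).Colorable (5 * τ) := by
    have := col.colorable
    simpa using this
  exact_mod_cast hcolorable.chromaticNumber_le
end

section
/- Let G be a finite simple graph such that for every vertex v of G, the set of neighbours of v has chromatic number at most τ, and let C be a shortest odd hole in G. Then the set of C-minor vertices of type one induces a subgraph with chromatic number at most 5τ. -/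
variable {V : Type*}

lemma natCast_inj_lt {n x y : ℕ} (hx : x < n) (hy : y < n) (h : (x : ZMod n) = y) : x = y := by
  have h1 := ZMod.val_cast_of_lt hx
  have h2 := ZMod.val_cast_of_lt hy
  rw [h] at h1; omega

lemma cast_val_eq {n : ℕ} [NeZero n] (x : ZMod n) : ((x.val : ℕ) : ZMod n) = x := by
  simp [ZMod.natCast_val]

lemma val_succ' {n : ℕ} (hn : 2 ≤ n) (i : ZMod n) : (i + 1).val = (i.val + 1) % n := by
  haveI : NeZero n := ⟨by omega⟩
  have h1 : (1 : ZMod n).val = 1 := by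
    rw [show (1 : ZMod n) = ((1 : ℕ) : ZMod n) by norm_cast, ZMod.val_cast_of_lt (by omega)]
  rw [ZMod.val_add, h1]

lemma eq_succ_iff {n : ℕ} (hn : 2 ≤ n) (i j : ZMod n) : j = i + 1 ↔ j.val = (i.val + 1) % n := by
  haveI : NeZero n := ⟨by omega⟩
  constructor
  · rintro rfl; exact val_succ' hn i
  · intro h
    apply ZMod.val_injective
    rw [val_succ' hn i]; exact h

lemma no_close {G : SimpleGraph V} {n : ℕ} {f : ZMod n → V} (hC : IsShortestOddHole G n f)
    {u v : V} {a b : ZMod n}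
    (hu2 : G.Adj u (f (a + 1))) (hu3 : ∀ j, G.Adj u (f j) → j = a ∨ j = a + 1)
    (hv1 : G.Adj v (f b)) (hv3 : ∀ j, G.Adj v (f j) → j = b ∨ j = b + 1)
    (hun : u ∉ Set.range f) (hvn : v ∉ Set.range f)
    (huv : G.Adj u v)
    {d : ℕ} (hd : (b - a - 1 : ZMod n).val = d) (hd2 : 2 ≤ d) (hd4 : d + 4 ≤ n)
    (hde : Even d) : False := by
  have hn5 : 5 ≤ n := by omega
  haveI : NeZero n := ⟨by omega⟩
  obtain ⟨⟨⟨hn4, hinj, hadj⟩, hodd⟩, hmin⟩ := hC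
  -- b = a + 1 + d
  have hb : b = a + 1 + (d : ZMod n) := by
    have h1 : ((d : ℕ) : ZMod n) = b - a - 1 := by rw [← hd]; exact cast_val_eq _
    rw [h1]; ring
  set N := d + 3 with hN
  haveI : NeZero N := ⟨by omega⟩
  -- helper adjacency facts
  have cast_inj : ∀ {x y : ℕ}, x ≤ d + 1 → y ≤ d + 1 → (x : ZMod n) = y → x = y := by
    intro x y hx hy h; exact natCast_inj_lt (by omega) (by omega) h
  have hff : ∀ m m' : ℕ, m ≤ d → m' ≤ d →
      (G.Adj (f (a + 1 + (m : ZMod n))) (f (a + 1 + (m' : ZMod n))) ↔ (m' = m + 1 ∨ m = m' + 1)) := by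
    intro m m' hm hm'
    rw [hadj]
    constructor
    · rintro (h | h)
      · left
        have : (m' : ZMod n) = ((m + 1 : ℕ) : ZMod n) := by
          push_cast; push_cast at h; linear_combination h
        exact cast_inj (by omega) (by omega) this
      · right
        have : (m : ZMod n) = ((m' + 1 : ℕ) : ZMod n) := by
          push_cast; push_cast at h; linear_combination h
        exact cast_inj (by omega) (by omega) this
    · rintro (rfl | rfl)
      · left; push_cast; ring
      · right; push_cast; ring
  have huf : ∀ m : ℕ, m ≤ d → (G.Adj u (f (a + 1 + (m : ZMod n))) ↔ m = 0) := by
    intro m hm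
    constructor
    · intro h
      rcases hu3 _ h with h' | h'
      · exfalso
        have : ((m + 1 : ℕ) : ZMod n) = ((0 : ℕ) : ZMod n) := by
          push_cast; linear_combination h'
        have := natCast_inj_lt (by omega) (by omega) this
        omega
      · have : ((m : ℕ) : ZMod n) = ((0 : ℕ) : ZMod n) := by
          push_cast; linear_combination h'
        exact cast_inj (by omega) (by omega) this
    · rintro rfl; simpa using hu2
  have hvf : ∀ m : ℕ, m ≤ d → (G.Adj v (f (a + 1 + (m : ZMod n))) ↔ m = d) := by
    intro m hm
    constructor
    · intro h
      rcases hv3 _ h with h' | h'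
      · rw [hb] at h'
        have : ((m : ℕ) : ZMod n) = ((d : ℕ) : ZMod n) := by linear_combination h'
        exact cast_inj (by omega) (by omega) this
      · exfalso
        rw [hb] at h'
        have : ((m : ℕ) : ZMod n) = ((d + 1 : ℕ) : ZMod n) := by
          push_cast; linear_combination h'
        have := cast_inj (by omega) (by omega) this
        omega
    · rintro rfl; rw [← hb]; exact hv1
  -- the shorter cycle
  set g : ZMod N → V := fun k => if k.val ≤ d then f (a + 1 + (k.val : ZMod n))
    else if k.val = d + 1 then v else u with hg
  have hvalN : ∀ k : ZMod N, k.val < N := fun k => ZMod.val_lt k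
  have hgf : ∀ k : ZMod N, k.val ≤ d → g k = f (a + 1 + (k.val : ZMod n)) := by
    intro k hk; simp only [hg, if_pos hk]
  have hgv : ∀ k : ZMod N, k.val = d + 1 → g k = v := by
    intro k hk; simp only [hg]; rw [if_neg (by omega), if_pos hk]
  have hgu : ∀ k : ZMod N, k.val = d + 2 → g k = u := by
    intro k hk; simp only [hg]; rw [if_neg (by omega), if_neg (by omega)]
  have hune : ∀ x, u ≠ f x := by intro x h; exact hun ⟨x, h.symm⟩
  have hvne : ∀ x, v ≠ f x := by intro x h; exact hvn ⟨x, h.symm⟩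
  have hginj : Function.Injective g := by
    intro i j h
    apply ZMod.val_injective
    have hi := hvalN i; have hj := hvalN j
    have hi3 : i.val ≤ d ∨ i.val = d + 1 ∨ i.val = d + 2 := by omega
    have hj3 : j.val ≤ d ∨ j.val = d + 1 ∨ j.val = d + 2 := by omega
    rcases hi3 with hi' | hi' | hi' <;> rcases hj3 with hj' | hj' | hj'
    · rw [hgf i hi', hgf j hj'] at h
      have := hinj h
      have : ((i.val : ℕ) : ZMod n) = ((j.val : ℕ) : ZMod n) := by linear_combination this
      exact cast_inj (by omega) (by omega) this
    · rw [hgf i hi', hgv j hj'] at h; exact absurd h.symm (hvne _)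
    · rw [hgf i hi', hgu j hj'] at h; exact absurd h.symm (hune _)
    · rw [hgv i hi', hgf j hj'] at h; exact absurd h (hvne _)
    · omega
    · rw [hgv i hi', hgu j hj'] at h; exact absurd h.symm huv.ne
    · rw [hgu i hi', hgf j hj'] at h; exact absurd h (hune _)
    · rw [hgu i hi', hgv j hj'] at h; exact absurd h huv.ne
    · omega
  have hgadj : ∀ i j : ZMod N, G.Adj (g i) (g j) ↔ (j = i + 1 ∨ i = j + 1) := by
    intro i j
    rw [eq_succ_iff (by omega : 2 ≤ N) i j, eq_succ_iff (by omega : 2 ≤ N) j i]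
    have hi := hvalN i; have hj := hvalN j
    have hi3 : i.val ≤ d ∨ i.val = d + 1 ∨ i.val = d + 2 := by omega
    have hj3 : j.val ≤ d ∨ j.val = d + 1 ∨ j.val = d + 2 := by omega
    rcases hi3 with hi' | hi' | hi' <;> rcases hj3 with hj' | hj' | hj'
    · rw [hgf i hi', hgf j hj', hff _ _ hi' hj']
      have hm1 : (i.val + 1) % N = i.val + 1 := Nat.mod_eq_of_lt (by omega)
      have hm2 : (j.val + 1) % N = j.val + 1 := Nat.mod_eq_of_lt (by omega)
      rw [hm1, hm2]
    · rw [hgf i hi', hgv j hj']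
      have : G.Adj (f (a + 1 + (i.val : ZMod n))) v ↔ i.val = d := by
        rw [← hvf i.val hi']; constructor <;> (intro h; exact h.symm)
      have hm1 : (i.val + 1) % N = i.val + 1 := Nat.mod_eq_of_lt (by omega)
      have hm2 : (j.val + 1) % N = j.val + 1 := Nat.mod_eq_of_lt (by omega)
      rw [this, hm1, hm2]
      omega
    · rw [hgf i hi', hgu j hj']
      have h1 : G.Adj (f (a + 1 + (i.val : ZMod n))) u ↔ i.val = 0 := by
        rw [← huf i.val hi']; constructor <;> (intro h; exact h.symm)
      have hmods : (j.val + 1) % N = 0 := by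
        have : j.val + 1 = N := by omega
        rw [this, Nat.mod_self]
      have hm1 : (i.val + 1) % N = i.val + 1 := Nat.mod_eq_of_lt (by omega)
      rw [h1, hm1, hmods]
      omega
    · have hm1 : (i.val + 1) % N = i.val + 1 := Nat.mod_eq_of_lt (by omega)
      have hm2 : (j.val + 1) % N = j.val + 1 := Nat.mod_eq_of_lt (by omega)
      rw [hgv i hi', hgf j hj', hvf j.val hj', hm1, hm2]
      omega
    · have hm1 : (i.val + 1) % N = i.val + 1 := Nat.mod_eq_of_lt (by omega)
      have hm2 : (j.val + 1) % N = j.val + 1 := Nat.mod_eq_of_lt (by omega)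
      rw [hgv i hi', hgv j hj', hm1, hm2]
      constructor
      · intro h; exact absurd h (G.irrefl)
      · rintro (h | h) <;> omega
    · have hmods : (j.val + 1) % N = 0 := by
        have : j.val + 1 = N := by omega
        rw [this, Nat.mod_self]
      have hm1 : (i.val + 1) % N = i.val + 1 := Nat.mod_eq_of_lt (by omega)
      rw [hgv i hi', hgu j hj', hm1, hmods]
      constructor
      · intro _; left; omega
      · intro _; exact huv.symm
    · have hmods : (i.val + 1) % N = 0 := by
        have : i.val + 1 = N := by omega
        rw [this, Nat.mod_self]
      have hm2 : (j.val + 1) % N = j.val + 1 := Nat.mod_eq_of_lt (by omega)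
      rw [hgu i hi', hgf j hj', huf j.val hj', hmods, hm2]
      omega
    · have hmods : (i.val + 1) % N = 0 := by
        have : i.val + 1 = N := by omega
        rw [this, Nat.mod_self]
      have hm2 : (j.val + 1) % N = j.val + 1 := Nat.mod_eq_of_lt (by omega)
      rw [hgu i hi', hgv j hj', hmods, hm2]
      constructor
      · intro _; right; omega
      · intro _; exact huv
    · have hmods : (i.val + 1) % N = 0 := by
        have : i.val + 1 = N := by omega
        rw [this, Nat.mod_self]
      have hmods2 : (j.val + 1) % N = 0 := by
        have : j.val + 1 = N := by omega
        rw [this, Nat.mod_self]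
      rw [hgu i hi', hgu j hj', hmods, hmods2]
      constructor
      · intro h; exact absurd h (G.irrefl)
      · rintro (h | h) <;> omega
  have hOdd : Odd N := by
    rcases hde with ⟨t, ht⟩; exact ⟨t + 1, by omega⟩
  have := hmin N g ⟨⟨by omega, hginj, hgadj⟩, hOdd⟩
  omega

lemma close {G : SimpleGraph V} {n : ℕ} {f : ZMod n → V} (hC : IsShortestOddHole G n f)
    {u v : V} {a b : ZMod n}
    (hu2 : G.Adj u (f (a + 1))) (hu3 : ∀ j, G.Adj u (f j) → j = a ∨ j = a + 1)
    (hv1 : G.Adj v (f b)) (hv2 : G.Adj v (f (b + 1)))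
    (hv3 : ∀ j, G.Adj v (f j) → j = b ∨ j = b + 1)
    (hu1 : G.Adj u (f a))
    (hun : u ∉ Set.range f) (hvn : v ∉ Set.range f)
    (huv : G.Adj u v) :
    b = a ∨ b = a + 1 ∨ b = a + 2 ∨ a = b + 1 ∨ a = b + 2 := by
  have hn4 : 4 ≤ n := hC.1.1.1
  have hodd : Odd n := hC.1.2
  have hn5 : 5 ≤ n := by
    rcases hodd with ⟨t, ht⟩; omega
  haveI : NeZero n := ⟨by omega⟩
  set d := (b - a - 1 : ZMod n).val with hdd
  set d' := (a - b - 1 : ZMod n).val with hdd'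
  have hdlt : d < n := ZMod.val_lt _
  have hdlt' : d' < n := ZMod.val_lt _
  have hcast : ((d : ℕ) : ZMod n) = b - a - 1 := cast_val_eq _
  have hcast' : ((d' : ℕ) : ZMod n) = a - b - 1 := cast_val_eq _
  -- special small cases
  by_cases h0 : d = 0
  · right; left
    have : ((0 : ℕ) : ZMod n) = b - a - 1 := by rw [← h0, hcast]
    push_cast at this; linear_combination -this
  by_cases h1 : d = 1
  · right; right; left
    have : ((1 : ℕ) : ZMod n) = b - a - 1 := by rw [← h1, hcast]
    push_cast at this
    have : b = a + 2 := by linear_combination -this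
    exact this
  by_cases h0' : d' = 0
  · right; right; right; left
    have : ((0 : ℕ) : ZMod n) = a - b - 1 := by rw [← h0', hcast']
    push_cast at this; linear_combination -this
  by_cases h1' : d' = 1
  · right; right; right; right
    have : ((1 : ℕ) : ZMod n) = a - b - 1 := by rw [← h1', hcast']
    push_cast at this
    have : a = b + 2 := by linear_combination -this
    exact this
  by_cases hb : b = a
  · left; exact hb
  -- now show d + d' = n - 2
  exfalso
  have hsum : (((d + d' : ℕ)) : ZMod n) = ((n - 2 : ℕ) : ZMod n) := by
    push_cast [hcast, hcast']
    have h2n : ((n - 2 : ℕ) : ZMod n) = -2 := by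
      have : ((n - 2 : ℕ) : ZMod n) = ((n : ℕ) : ZMod n) - ((2:ℕ) : ZMod n) := by
        rw [← Nat.cast_sub (by omega)]
      rw [this, ZMod.natCast_self]
      push_cast; ring
    rw [h2n]; ring
  have hmod := (ZMod.natCast_eq_natCast_iff _ _ _).mp hsum
  -- d ≠ n-1 (else b = a), d' ≠ n-1
  have hdne : d ≠ n - 1 := by
    intro h
    apply hb
    have : ((n - 1 : ℕ) : ZMod n) = b - a - 1 := by rw [← h, hcast]
    have h2 : ((n - 1 : ℕ) : ZMod n) = -1 := by
      have : ((n - 1 : ℕ) : ZMod n) = ((n : ℕ) : ZMod n) - ((1:ℕ) : ZMod n) := by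
        rw [← Nat.cast_sub (by omega)]
      rw [this, ZMod.natCast_self]; push_cast; ring
    rw [h2] at this
    linear_combination -this
  have hdne' : d' ≠ n - 1 := by
    intro h
    apply hb
    have : ((n - 1 : ℕ) : ZMod n) = a - b - 1 := by rw [← h, hcast']
    have h2 : ((n - 1 : ℕ) : ZMod n) = -1 := by
      have : ((n - 1 : ℕ) : ZMod n) = ((n : ℕ) : ZMod n) - ((1:ℕ) : ZMod n) := by
        rw [← Nat.cast_sub (by omega)]
      rw [this, ZMod.natCast_self]; push_cast; ring
    rw [h2] at this
    linear_combination this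
  have hsum' : d + d' = n - 2 := by
    have hmm : (d + d') % n = (n - 2) % n := hmod
    rw [Nat.mod_eq_of_lt (by omega : n - 2 < n)] at hmm
    rcases Nat.lt_or_ge (d + d') n with h | h
    · rw [Nat.mod_eq_of_lt h] at hmm; exact hmm
    · rw [Nat.mod_eq_sub_mod h, Nat.mod_eq_of_lt (by omega)] at hmm
      omega
  -- one of d, d' is even
  have hn2odd : ¬ Even (n - 2) ∨ True := Or.inr trivial
  have hpar : Even d ∨ Even d' := by
    rcases Nat.even_or_odd d with h | h
    · left; exact h
    rcases Nat.even_or_odd d' with h' | h'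
    · right; exact h'
    exfalso
    rcases hodd with ⟨t, ht⟩
    rcases h with ⟨s, hs⟩
    rcases h' with ⟨s', hs'⟩
    omega
  rcases hpar with hpar | hpar
  · exact no_close hC hu2 hu3 hv1 hv3 hun hvn huv hdd.symm (by omega) (by omega) hpar
  · exact no_close hC hv2 hv3 hu1 hu3 hvn hun huv.symm hdd'.symm (by omega) (by omega) hpar

lemma fivecol (n : ℕ) (hn : 5 ≤ n) : ∃ c : ZMod n → ℕ,
    (∀ i, c i < 5) ∧ ∀ i : ZMod n, c i ≠ c (i + 1) ∧ c i ≠ c (i + 2) := by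
  haveI : NeZero n := ⟨by omega⟩
  refine ⟨fun i => if i.val = n - 1 then 3 else if i.val = n - 2 then 4 else i.val % 3, ?_, ?_⟩
  · intro i
    show (if i.val = n - 1 then 3 else if i.val = n - 2 then 4 else i.val % 3) < 5
    split_ifs <;> omega
  · intro i
    have hiv : i.val < n := ZMod.val_lt i
    have h1 : (i + 1).val = (i.val + 1) % n := val_succ' (by omega) i
    have h2 : (i + 2).val = ((i.val + 1) % n + 1) % n := by
      rw [show i + 2 = (i + 1) + 1 by ring, val_succ' (by omega), h1]
    set p := i.val with hp
    rcases (by omega : p = n - 1 ∨ p = n - 2 ∨ p = n - 3 ∨ p + 4 ≤ n) with h | h | h | h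
    · have e1 : (i + 1).val = 0 := by
        rw [h1, h, show n - 1 + 1 = n by omega, Nat.mod_self]
      have e2 : (i + 2).val = 1 := by
        rw [h2, h, show n - 1 + 1 = n by omega, Nat.mod_self]
        exact Nat.mod_eq_of_lt (by omega)
      simp only [← hp, e1, e2, h]
      split_ifs <;> omega
    · have e1 : (i + 1).val = n - 1 := by
        rw [h1, h, show n - 2 + 1 = n - 1 by omega]
        exact Nat.mod_eq_of_lt (by omega)
      have e2 : (i + 2).val = 0 := by
        rw [h2, h, show n - 2 + 1 = n - 1 by omega,
          show (n - 1) % n = n - 1 from Nat.mod_eq_of_lt (by omega),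
          show n - 1 + 1 = n by omega, Nat.mod_self]
      simp only [← hp, e1, e2, h]
      split_ifs <;> omega
    · have e1 : (i + 1).val = n - 2 := by
        rw [h1, h, show n - 3 + 1 = n - 2 by omega]
        exact Nat.mod_eq_of_lt (by omega)
      have e2 : (i + 2).val = n - 1 := by
        rw [h2, h, show n - 3 + 1 = n - 2 by omega,
          show (n - 2) % n = n - 2 from Nat.mod_eq_of_lt (by omega),
          show n - 2 + 1 = n - 1 by omega]
        exact Nat.mod_eq_of_lt (by omega)
      simp only [← hp, e1, e2, h]
      split_ifs <;> omega
    · have e1 : (i + 1).val = p + 1 := by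
        rw [h1]; exact Nat.mod_eq_of_lt (by omega)
      have e2 : (i + 2).val = p + 2 := by
        rw [h2, show (p + 1) % n = p + 1 from Nat.mod_eq_of_lt (by omega)]
        exact Nat.mod_eq_of_lt (by omega)
      simp only [← hp, e1, e2]
      split_ifs <;> omega

/-- if every vertex of `G` has neighbourhood of chromatic number at most
`τ` and `C` is a shortest odd hole in `G`, then the set of `C`-minor vertices of type
one induces a subgraph with chromatic number at most `5τ`. -/
theorem chromaticNumber_typeOne_le {V : Type} [Fintype V] (G : SimpleGraph V) (τ : ℕ)
    (hτ : ∀ v : V, (G.induce (G.neighborSet v)).chromaticNumber ≤ (τ : ℕ∞))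
    (n : ℕ) (f : ZMod n → V) (hC : IsShortestOddHole G n f) :
    (G.induce {v : V | IsCMinorTypeOne G n f v}).chromaticNumber ≤ ((5 * τ : ℕ) : ℕ∞) := by
  classical
  have hn4 : 4 ≤ n := hC.1.1.1
  have hodd := hC.1.2
  have hn5 : 5 ≤ n := by rcases hodd with ⟨t, ht⟩; omega
  haveI : NeZero n := ⟨by omega⟩
  obtain ⟨c, hc5, hcp⟩ := fivecol n hn5
  have hcol : ∀ w : V, (G.induce (G.neighborSet w)).Colorable τ := fun w =>
    (SimpleGraph.chromaticNumber_le_iff_colorable).mp (hτ w)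
  let Cw : ∀ w : V, (G.induce (G.neighborSet w)).Coloring (Fin τ) := fun w => (hcol w).some
  let col2 : V → ZMod n → ℕ := fun x a =>
    if h : G.Adj (f a) x then ((Cw (f a)) ⟨x, h⟩).val else 0
  have hcol2lt : ∀ x a, G.Adj (f a) x → col2 x a < τ := by
    intro x a h
    simp only [col2, dif_pos h]
    exact ((Cw (f a)) ⟨x, h⟩).isLt
  have hcol2ne : ∀ (a : ZMod n) (x y : V) (hx : G.Adj (f a) x) (hy : G.Adj (f a) y),
      G.Adj x y → col2 x a ≠ col2 y a := by
    intro a x y hx hy hxy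
    simp only [col2, dif_pos hx, dif_pos hy]
    intro h
    have hne : (Cw (f a)) ⟨x, hx⟩ ≠ (Cw (f a)) ⟨y, hy⟩ :=
      (Cw (f a)).valid (by simpa using hxy)
    exact hne (Fin.val_injective h)
  apply SimpleGraph.Colorable.chromaticNumber_le
  set S := {v : V | IsCMinorTypeOne G n f v} with hS
  have hmem : ∀ v : ↥S, IsCMinorTypeOne G n f v.1 := fun v => v.2
  let av : ↥S → ZMod n := fun v => (hmem v).2.choose
  have hav : ∀ v : ↥S, G.Adj v.1 (f (av v)) ∧ G.Adj v.1 (f (av v + 1)) ∧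
      ∀ j : ZMod n, G.Adj v.1 (f j) → j = av v ∨ j = av v + 1 := fun v => (hmem v).2.choose_spec
  refine ⟨SimpleGraph.Coloring.mk
    (fun v => (⟨5 * col2 v.1 (av v) + c (av v), by
      have h1 := hcol2lt v.1 (av v) (hav v).1.symm
      have h2 := hc5 (av v)
      omega⟩ : Fin (5 * τ)))
    ?_⟩
  intro x y hadj heq
  have hxy : G.Adj x.1 y.1 := hadj
  simp only [Fin.mk.injEq] at heq
  have hc5x := hc5 (av x); have hc5y := hc5 (av y)
  have hceq : c (av x) = c (av y) := by omega
  have hteq : col2 x.1 (av x) = col2 y.1 (av y) := by omega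
  have hd := close hC (hav x).2.1 (hav x).2.2 (hav y).1 (hav y).2.1 (hav y).2.2 (hav x).1
    (hmem x).1.1.1 (hmem y).1.1.1 hxy
  rcases hd with e | e | e | e | e
  · -- av y = av x
    rw [e] at hteq
    exact hcol2ne (av x) x.1 y.1 (hav x).1.symm (e ▸ (hav y).1.symm) hxy hteq
  · exact (e ▸ (hcp (av x)).1) hceq
  · exact (e ▸ (hcp (av x)).2) hceq
  · exact (e ▸ (hcp (av y)).1) hceq.symm
  · exact (e ▸ (hcp (av y)).2) hceq.symm
end

section
/- Let G be a finite simple graph such that for every vertex v of G, the set of neighbours of v has chromatic number at most τ, and let C be a shortest odd hole in G. Then the set of C-minor vertices of type two induces a subgraph with chromatic number at most 5τ. -/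
variable {V : Type*}

lemma cast_nat_inj {n : ℕ} [NeZero n] {p q : ℕ} (hp : p < n) (hq : q < n) :
    ((p : ZMod n) = (q : ZMod n)) ↔ p = q := by
  constructor
  · intro h
    have := congrArg ZMod.val h
    rwa [ZMod.val_cast_of_lt hp, ZMod.val_cast_of_lt hq] at this
  · rintro rfl; rfl

lemma succ_iff {m : ℕ} (hm : 2 ≤ m) (a b : ZMod m) :
    b = a + 1 ↔ (b.val = a.val + 1 ∨ (a.val = m - 1 ∧ b.val = 0)) := by
  haveI : NeZero m := ⟨by omega⟩
  haveI : Fact (1 < m) := ⟨by omega⟩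
  have hv1 : (1 : ZMod m).val = 1 := ZMod.val_one m
  have ha := a.val_lt
  have hb := b.val_lt
  constructor
  · rintro rfl
    rw [ZMod.val_add, hv1]
    rcases lt_or_ge (a.val + 1) m with h | h
    · left; exact Nat.mod_eq_of_lt h
    · right
      have : a.val + 1 = m := by omega
      rw [this, Nat.mod_self]
      omega
  · rintro (h | ⟨h1, h2⟩)
    · apply ZMod.val_injective
      rw [ZMod.val_add, hv1, Nat.mod_eq_of_lt (by omega), h]
    · apply ZMod.val_injective
      rw [ZMod.val_add, hv1, h1, h2]
      have : m - 1 + 1 = m := by omega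
      rw [this, Nat.mod_self]

lemma no_far_adj {G : SimpleGraph V} {n : ℕ} {f : ZMod n → V}
    (hC : IsShortestOddHole G n f) {u v : V} {i j : ZMod n}
    (hu : u ∉ Set.range f) (hv : v ∉ Set.range f)
    (hui2 : G.Adj u (f (i + 2)))
    (huN : ∀ x, G.Adj u (f x) → x = i ∨ x = i + 1 ∨ x = i + 2)
    (hvj : G.Adj v (f j))
    (hvN : ∀ x, G.Adj v (f x) → x = j ∨ x = j + 1 ∨ x = j + 2)
    (huv : G.Adj u v)
    (hd4 : 4 ≤ (j - i).val) (hdn : (j - i).val ≤ n - 3) (hdev : Even ((j - i).val)) :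
    False := by
  obtain ⟨⟨⟨hn4, hfinj, hadj⟩, hodd⟩, hmin⟩ := hC
  haveI : NeZero n := ⟨by omega⟩
  obtain ⟨d, hd⟩ : ∃ x : ℕ, (j - i).val = x := ⟨_, rfl⟩
  rw [hd] at hd4 hdn hdev
  have hdn' : d < n := hd ▸ ZMod.val_lt _
  have hn5 : 5 ≤ n := by obtain ⟨k, hk⟩ := hodd; omega
  have hji : j = i + (d : ZMod n) := by
    have h1 : ((d : ℕ) : ZMod n) = j - i := by rw [← hd]; exact ZMod.natCast_rightInverse (j - i)
    rw [h1]; ring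
  haveI : NeZero (d + 1) := ⟨by omega⟩
  have hc2 : ((2 : ℕ) : ZMod n) = 2 := by norm_num
  -- S1 : adjacency of u to arc vertices
  have S1 : ∀ a : ℕ, 2 ≤ a → a ≤ d → (G.Adj u (f (i + (a : ZMod n))) ↔ a = 2) := by
    intro a h2 hle
    constructor
    · intro h
      rcases huN _ h with h' | h' | h'
      · have : (a : ZMod n) = ((0 : ℕ) : ZMod n) := by
          apply add_left_cancel (a := i)
          rw [h']; norm_num
        have := (cast_nat_inj (by omega) (by omega)).mp this
        omega
      · have : (a : ZMod n) = ((1 : ℕ) : ZMod n) := by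
          apply add_left_cancel (a := i)
          rw [h']; norm_num
        have := (cast_nat_inj (by omega) (by omega)).mp this
        omega
      · have : (a : ZMod n) = ((2 : ℕ) : ZMod n) := by
          apply add_left_cancel (a := i)
          rw [h']; norm_num
        exact (cast_nat_inj (by omega) (by omega)).mp this
    · rintro rfl
      rwa [hc2]
  -- S2 : adjacency of v to arc vertices
  have S2 : ∀ a : ℕ, 2 ≤ a → a ≤ d → (G.Adj v (f (i + (a : ZMod n))) ↔ a = d) := by
    intro a h2 hle
    constructor
    · intro h
      rcases hvN _ h with h' | h' | h'
      · have : (a : ZMod n) = ((d : ℕ) : ZMod n) := by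
          apply add_left_cancel (a := i); rw [h', hji]
        have := (cast_nat_inj (by omega) (by omega)).mp this
        omega
      · have : (a : ZMod n) = ((d + 1 : ℕ) : ZMod n) := by
          apply add_left_cancel (a := i); rw [h', hji]; push_cast; ring
        have := (cast_nat_inj (by omega) (by omega)).mp this
        omega
      · have : (a : ZMod n) = ((d + 2 : ℕ) : ZMod n) := by
          apply add_left_cancel (a := i); rw [h', hji]; push_cast; ring
        have := (cast_nat_inj (by omega) (by omega)).mp this
        omega
    · rintro rfl
      rwa [← hji]
  -- S3 : adjacency between arc vertices
  have S3 : ∀ a b : ℕ, 2 ≤ a → a ≤ d → 2 ≤ b → b ≤ d →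
      (G.Adj (f (i + (a : ZMod n))) (f (i + (b : ZMod n))) ↔ (b = a + 1 ∨ a = b + 1)) := by
    intro a b h2a hla h2b hlb
    rw [hadj]
    constructor
    · rintro (h | h)
      · left
        have : (b : ZMod n) = ((a + 1 : ℕ) : ZMod n) := by
          apply add_left_cancel (a := i); rw [h]; push_cast; ring
        exact (cast_nat_inj (by omega) (by omega)).mp this
      · right
        have : (a : ZMod n) = ((b + 1 : ℕ) : ZMod n) := by
          apply add_left_cancel (a := i); rw [h]; push_cast; ring
        exact (cast_nat_inj (by omega) (by omega)).mp this
    · rintro (rfl | rfl)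
      · left; push_cast; ring
      · right; push_cast; ring
  -- S4 : injectivity on arc vertices
  have S4 : ∀ a b : ℕ, a < n → b < n →
      f (i + (a : ZMod n)) = f (i + (b : ZMod n)) → a = b := by
    intro a b ha hb h
    have h1 := hfinj h
    have h2 : (a : ZMod n) = (b : ZMod n) := add_left_cancel h1
    exact (cast_nat_inj ha hb).mp h2
  -- the shorter hole
  set g : ZMod (d + 1) → V := fun k =>
    if k.val = 0 then u else if k.val = 1 then v
    else f (i + ((2 + (d - k.val) : ℕ) : ZMod n)) with hg
  have tri : ∀ k : ZMod (d + 1), k.val = 0 ∨ k.val = 1 ∨ (2 ≤ k.val ∧ k.val ≤ d) := by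
    intro k; have := k.val_lt; omega
  have g0 : ∀ k : ZMod (d + 1), k.val = 0 → g k = u := by
    intro k hk
    rw [hg]
    simp only
    rw [if_pos hk]
  have g1 : ∀ k : ZMod (d + 1), k.val = 1 → g k = v := by
    intro k hk
    rw [hg]
    simp only
    rw [if_neg (by omega), if_pos hk]
  have gA : ∀ k : ZMod (d + 1), 2 ≤ k.val → g k = f (i + ((2 + (d - k.val) : ℕ) : ZMod n)) := by
    intro k hk
    rw [hg]
    simp only
    rw [if_neg (by omega), if_neg (by omega)]
  have hune : u ≠ v := G.ne_of_adj huv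
  -- injectivity of g
  have ginj : Function.Injective g := by
    intro a b hab
    apply ZMod.val_injective
    rcases tri a with ha | ha | ⟨ha1, ha2⟩ <;> rcases tri b with hb | hb | ⟨hb1, hb2⟩
    · omega
    · rw [g0 a ha, g1 b hb] at hab; exact absurd hab hune
    · rw [g0 a ha, gA b hb1] at hab; exact absurd ⟨_, hab.symm⟩ hu
    · rw [g1 a ha, g0 b hb] at hab; exact absurd hab.symm hune
    · omega
    · rw [g1 a ha, gA b hb1] at hab; exact absurd ⟨_, hab.symm⟩ hv
    · rw [gA a ha1, g0 b hb] at hab; exact absurd ⟨_, hab⟩ hu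
    · rw [gA a ha1, g1 b hb] at hab; exact absurd ⟨_, hab⟩ hv
    · rw [gA a ha1, gA b hb1] at hab
      have := S4 _ _ (by omega) (by omega) hab
      omega
  -- adjacency for g
  have gadj : ∀ a b : ZMod (d + 1), G.Adj (g a) (g b) ↔ (b = a + 1 ∨ a = b + 1) := by
    intro a b
    rw [succ_iff (by omega) a b, succ_iff (by omega) b a]
    rcases tri a with ha | ha | ⟨ha1, ha2⟩ <;> rcases tri b with hb | hb | ⟨hb1, hb2⟩
    · rw [g0 a ha, g0 b hb]; exact iff_of_false (G.irrefl) (by omega)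
    · rw [g0 a ha, g1 b hb]; exact iff_of_true huv (by omega)
    · rw [g0 a ha, gA b hb1, S1 _ (by omega) (by omega)]; omega
    · rw [g1 a ha, g0 b hb]; exact iff_of_true huv.symm (by omega)
    · rw [g1 a ha, g1 b hb]; exact iff_of_false (G.irrefl) (by omega)
    · rw [g1 a ha, gA b hb1, S2 _ (by omega) (by omega)]; omega
    · rw [gA a ha1, g0 b hb, G.adj_comm, S1 _ (by omega) (by omega)]; omega
    · rw [gA a ha1, g1 b hb, G.adj_comm, S2 _ (by omega) (by omega)]; omega
    · rw [gA a ha1, gA b hb1, S3 _ _ (by omega) (by omega) (by omega) (by omega)]; omega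
  have hodd' : IsOddHole G (d + 1) g := ⟨⟨by omega, ginj, gadj⟩, by
    rcases hdev with ⟨k, hk⟩; exact ⟨k, by omega⟩⟩
  have := hmin (d + 1) g hodd'
  omega

lemma centers_close {G : SimpleGraph V} {n : ℕ} {f : ZMod n → V}
    (hC : IsShortestOddHole G n f) {u v : V} {i j : ZMod n}
    (hu : u ∉ Set.range f) (hv : v ∉ Set.range f)
    (hui : G.Adj u (f i)) (hui2 : G.Adj u (f (i + 2)))
    (huN : ∀ x, G.Adj u (f x) → x = i ∨ x = i + 1 ∨ x = i + 2)
    (hvj : G.Adj v (f j)) (hvj2 : G.Adj v (f (j + 2)))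
    (hvN : ∀ x, G.Adj v (f x) → x = j ∨ x = j + 1 ∨ x = j + 2)
    (huv : G.Adj u v) :
    (j - i).val ≤ 2 ∨ n - 2 ≤ (j - i).val := by
  have hn4 : 4 ≤ n := hC.1.1.1
  have hodd : Odd n := hC.1.2
  haveI : NeZero n := ⟨by omega⟩
  have hn5 : 5 ≤ n := by obtain ⟨k, hk⟩ := hodd; omega
  by_contra hcon
  push_neg at hcon
  obtain ⟨h3, hn2⟩ := hcon
  have hdlt : (j - i).val < n := ZMod.val_lt _
  rcases Nat.even_or_odd ((j - i).val) with hev | hodd'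
  · obtain ⟨k, hk⟩ := hev
    exact no_far_adj hC hu hv hui2 huN hvj hvN huv (by omega) (by omega) ⟨k, hk⟩
  · -- swap roles
    have hsum : (j - i).val + (i - j).val = n := by
      have h0 : (((j - i).val + (i - j).val : ℕ) : ZMod n) = 0 := by
        push_cast
        rw [ZMod.natCast_rightInverse (j - i), ZMod.natCast_rightInverse (i - j)]
        ring
      have hdvd := (ZMod.natCast_eq_zero_iff _ n).mp h0
      have hle : n ≤ (j - i).val + (i - j).val := Nat.le_of_dvd (by omega) hdvd
      have hlt2 : (i - j).val < n := ZMod.val_lt _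
      have hdvd2 : n ∣ ((j - i).val + (i - j).val - n) := Nat.dvd_sub hdvd dvd_rfl
      have hz : (j - i).val + (i - j).val - n = 0 :=
        Nat.eq_zero_of_dvd_of_lt hdvd2 (by omega)
      omega
    have hev' : Even ((i - j).val) := by
      obtain ⟨k, hk⟩ := hodd
      obtain ⟨l, hl⟩ := hodd'
      exact ⟨(k - l), by omega⟩
    obtain ⟨k, hk⟩ := hev'
    exact no_far_adj hC hv hu hvj2 hvN hui huN huv.symm (by omega) (by omega) ⟨k, hk⟩

def hfun (n s : ℕ) : ℕ := if s < 3 * (n / 3) then s % 3 else 3 + (s - 3 * (n / 3))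

lemma hfun_lt {n s : ℕ} (hn : 5 ≤ n) (hs : s < n) : hfun n s < 5 := by
  unfold hfun; split_ifs <;> omega

lemma hfun_ne {n s t : ℕ} (hn : 5 ≤ n) (hs : s < n) (ht : t < n)
    (hrel : t = s + 1 ∨ t = s + 2 ∨ t + n = s + 1 ∨ t + n = s + 2) :
    hfun n s ≠ hfun n t := by
  unfold hfun; split_ifs <;> omega

lemma combo_ne {τ a b a' b' : ℕ} (hb : b < τ) (hb' : b' < τ)
    (h : a ≠ a' ∨ b ≠ b') : a * τ + b ≠ a' * τ + b' := by
  intro he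
  have h1 : b = b' := by
    have e1 : (b + a * τ) % τ = (b' + a' * τ) % τ := by
      rw [show b + a * τ = a * τ + b by ring, show b' + a' * τ = a' * τ + b' by ring, he]
    rwa [Nat.add_mul_mod_self_right, Nat.add_mul_mod_self_right,
      Nat.mod_eq_of_lt hb, Nat.mod_eq_of_lt hb'] at e1
  have h2 : a = a' := by
    have e1 : (b + a * τ) / τ = (b' + a' * τ) / τ := by
      rw [show b + a * τ = a * τ + b by ring, show b' + a' * τ = a' * τ + b' by ring, he]
    rwa [Nat.add_mul_div_right _ _ (by omega), Nat.add_mul_div_right _ _ (by omega),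
      Nat.div_eq_of_lt hb, Nat.div_eq_of_lt hb', Nat.zero_add, Nat.zero_add] at e1
  tauto

lemma val_add_small {n : ℕ} [NeZero n] (a b : ZMod n) :
    b.val = a.val + (b - a).val ∨ b.val + n = a.val + (b - a).val := by
  have h1 : b = a + (((b - a).val : ℕ) : ZMod n) := by
    rw [ZMod.natCast_rightInverse (b - a)]; ring
  have h2 : b.val = (a.val + ((((b - a).val : ℕ) : ZMod n)).val) % n := by
    conv_lhs => rw [h1]
    rw [ZMod.val_add]
  rw [ZMod.val_cast_of_lt (ZMod.val_lt _)] at h2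
  have ha := a.val_lt
  have hd := (b - a).val_lt
  rcases lt_or_ge (a.val + (b - a).val) n with h | h
  · left; rw [h2, Nat.mod_eq_of_lt h]
  · right; rw [h2, Nat.mod_eq_sub_mod h, Nat.mod_eq_of_lt (by omega)]; omega

lemma val_sub_add_val {n : ℕ} [NeZero n] (a b : ZMod n) (h : a ≠ b) :
    (b - a).val + (a - b).val = n := by
  have h0 : (((b - a).val + (a - b).val : ℕ) : ZMod n) = 0 := by
    push_cast
    rw [ZMod.natCast_rightInverse (b - a), ZMod.natCast_rightInverse (a - b)]
    ring
  have hdvd := (ZMod.natCast_eq_zero_iff _ n).mp h0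
  have hne : (b - a).val ≠ 0 := by
    intro hz
    exact h (sub_eq_zero.mp ((ZMod.val_eq_zero _).mp hz)).symm
  have h1 := (b - a).val_lt
  have h2 := (a - b).val_lt
  have hle : n ≤ (b - a).val + (a - b).val := Nat.le_of_dvd (by omega) hdvd
  have hdvd2 : n ∣ ((b - a).val + (a - b).val - n) := Nat.dvd_sub hdvd dvd_rfl
  have hz := Nat.eq_zero_of_dvd_of_lt hdvd2 (by omega)
  omega

/-- if every vertex of `G` has neighbourhood of chromatic number at most
`τ` and `C` is a shortest odd hole in `G`, then the set of `C`-minor vertices of type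
two induces a subgraph with chromatic number at most `5τ`. -/
theorem chromaticNumber_typeTwo_le {V : Type} [Fintype V] (G : SimpleGraph V) (τ : ℕ)
    (hτ : ∀ v : V, (G.induce (G.neighborSet v)).chromaticNumber ≤ (τ : ℕ∞))
    (n : ℕ) (f : ZMod n → V) (hC : IsShortestOddHole G n f) :
    (G.induce {v : V | IsCMinorTypeTwo G n f v}).chromaticNumber ≤ ((5 * τ : ℕ) : ℕ∞) := by
  rw [SimpleGraph.chromaticNumber_le_iff_colorable]
  by_cases hne : ∃ w : V, IsCMinorTypeTwo G n f w
  · classical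
    have hn4 : 4 ≤ n := hC.1.1.1
    have hodd : Odd n := hC.1.2
    haveI : NeZero n := ⟨by omega⟩
    have hn5 : 5 ≤ n := by obtain ⟨k, hk⟩ := hodd; omega
    -- colorings of neighbourhoods
    have CN : ∀ i : ZMod n, (G.induce (G.neighborSet (f i))).Coloring (Fin τ) := fun i =>
      (SimpleGraph.chromaticNumber_le_iff_colorable.mp (hτ (f i))).some
    -- τ is positive
    obtain ⟨w₀, hw₀⟩ := hne
    obtain ⟨c₀, hc₀, _, _⟩ := hw₀.2
    have τpos : 0 < τ :=
      (CN c₀ ⟨w₀, (G.mem_neighborSet (f c₀) w₀).mpr hc₀.symm⟩).pos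
    -- choose centers
    have hch : ∀ w : {v : V | IsCMinorTypeTwo G n f v}, ∃ c : ZMod n,
        G.Adj w.1 (f c) ∧ G.Adj w.1 (f (c + 2)) ∧
          ∀ x : ZMod n, G.Adj w.1 (f x) → x = c ∨ x = c + 1 ∨ x = c + 2 := fun w => w.2.2
    choose ctr hctr1 hctr2 hctr3 using hch
    -- the component coloring, proof-irrelevant form
    set comp : ZMod n → V → ℕ := fun c x =>
      if h : x ∈ G.neighborSet (f c) then ((CN c) ⟨x, h⟩).val else 0 with hcomp
    have comp_lt : ∀ c x, comp c x < τ := by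
      intro c x
      simp only [hcomp]
      split_ifs with h
      · exact Fin.is_lt _
      · exact τpos
    rw [SimpleGraph.colorable_iff_exists_bdd_nat_coloring]
    refine ⟨SimpleGraph.Coloring.mk
      (fun w => hfun n (ctr w).val * τ + comp (ctr w) w.1) ?_, ?_⟩
    · -- validity
      intro a b hab
      have hab' : G.Adj a.1 b.1 := hab
      refine combo_ne (comp_lt _ _) (comp_lt _ _) ?_
      by_cases h : ctr a = ctr b
      · right
        rw [h]
        have ha : a.1 ∈ G.neighborSet (f (ctr b)) :=
          (G.mem_neighborSet _ _).mpr (h ▸ (hctr1 a)).symm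
        have hb : b.1 ∈ G.neighborSet (f (ctr b)) :=
          (G.mem_neighborSet _ _).mpr (hctr1 b).symm
        simp only [hcomp]
        rw [dif_pos ha, dif_pos hb]
        have hne2 : (CN (ctr b)) ⟨a.1, ha⟩ ≠ (CN (ctr b)) ⟨b.1, hb⟩ :=
          (CN (ctr b)).valid hab'
        exact fun hv => hne2 (Fin.ext hv)
      · left
        have hclose := centers_close hC a.2.1.1.1 b.2.1.1.1 (hctr1 a) (hctr2 a) (hctr3 a)
          (hctr1 b) (hctr2 b) (hctr3 b) hab'
        have hδne : (ctr b - ctr a).val ≠ 0 := by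
          intro hz
          apply h
          have : ctr b - ctr a = 0 := (ZMod.val_eq_zero _).mp hz
          have := sub_eq_zero.mp this
          exact this.symm
        have hsum := val_sub_add_val (ctr a) (ctr b) h
        have hlt1 := (ctr a).val_lt
        have hlt2 := (ctr b).val_lt
        have hδlt := (ctr b - ctr a).val_lt
        have hδ'lt := (ctr a - ctr b).val_lt
        rcases hclose with hle | hge
        · have hrel := val_add_small (ctr a) (ctr b)
          exact hfun_ne hn5 hlt1 hlt2 (by omega)
        · have hrel := val_add_small (ctr b) (ctr a)
          exact (hfun_ne hn5 hlt2 hlt1 (by omega)).symm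
    · -- bound
      intro w
      have h1 : hfun n (ctr w).val < 5 := hfun_lt hn5 (ZMod.val_lt _)
      have h2 : comp (ctr w) w.1 < τ := comp_lt _ _
      have h3 : (hfun n (ctr w).val + 1) * τ ≤ 5 * τ := Nat.mul_le_mul_right τ (by omega)
      rw [add_one_mul] at h3
      show hfun n (ctr w).val * τ + comp (ctr w) w.1 < 5 * τ
      omega
  · push_neg at hne
    haveI : IsEmpty ({v : V | IsCMinorTypeTwo G n f v} : Set V) :=
      ⟨fun w => hne w.1 w.2⟩
    exact SimpleGraph.Colorable.of_isEmpty _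
end

section
/- Let C be an odd cycle, and let A, B ⊆ V(C) both be normal in C. Then every odd (A,B)-gap is vertex-disjoint from every even (A,B)-gap. Moreover, if A ∩ B is not normal in C, then there exist both an odd (A,B)-gap and an even (A,B)-gap. -/
variable {V : Type*}

section ABG

open Classical in
noncomputable def ec (n : ℕ) (A : Set (ZMod n)) (x : ZMod n) (k : ℕ) : ℕ :=
  ((Finset.range k).filter (fun m : ℕ => x + (m : ZMod n) ∈ A ∧ x + (m : ZMod n) + 1 ∈ A)).card

open Classical in
noncomputable def tc (n : ℕ) (A : Set (ZMod n)) (x y : ZMod n) : ℕ :=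
  if x ∈ A ↔ y ∈ A then 0 else 1

lemma ec_zero (n : ℕ) (A : Set (ZMod n)) (x : ZMod n) : ec n A x 0 = 0 := by
  simp [ec]

lemma ec_add (n : ℕ) (A : Set (ZMod n)) (x : ZMod n) (a b : ℕ) :
    ec n A x (a + b) = ec n A x a + ec n A (x + (a : ZMod n)) b := by
  classical
  induction b with
  | zero => simp [ec]
  | succ b ih =>
    have h1 : a + (b + 1) = (a + b) + 1 := by omega
    rw [h1]
    simp only [ec, Finset.range_add_one, Finset.filter_insert] at *
    have e : x + ((a + b : ℕ) : ZMod n) = x + (a : ZMod n) + ((b : ℕ) : ZMod n) := by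
      push_cast; ring
    rw [e]
    by_cases h : x + (a : ZMod n) + ((b : ℕ) : ZMod n) ∈ A ∧
        x + (a : ZMod n) + ((b : ℕ) : ZMod n) + 1 ∈ A
    · rw [if_pos h, if_pos h, Finset.card_insert_of_notMem (by simp),
        Finset.card_insert_of_notMem (by simp), ih]
      omega
    · rw [if_neg h, if_neg h, ih]

lemma ec_parity (n : ℕ) (A : Set (ZMod n)) (hA : IsNormal n A) :
    ∀ k : ℕ, ∀ x : ZMod n, k ≤ n → x ∈ A → x + (k : ZMod n) ∈ A →
      k % 2 = ec n A x k % 2 := by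
  intro k
  induction k using Nat.strong_induction_on with
  | _ k IH =>
  intro x hkn hx hxk
  classical
  by_cases hsp : ∃ m : ℕ, 0 < m ∧ m < k ∧ x + (m : ZMod n) ∈ A
  · obtain ⟨m, hm0, hmk, hmA⟩ := hsp
    have A1 := IH m hmk x (by omega) hx hmA
    have e2 : x + (m : ZMod n) + ((k - m : ℕ) : ZMod n) = x + (k : ZMod n) := by
      rw [add_assoc, ← Nat.cast_add]
      congr 2
      omega
    have A2 := IH (k - m) (by omega) (x + (m : ZMod n)) (by omega) hmA (by rw [e2]; exact hxk)
    have E := ec_add n A x m (k - m)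
    rw [show m + (k - m) = k from by omega] at E
    omega
  · push_neg at hsp
    match k, hkn with
    | 0, _ => simp [ec]
    | 1, _ =>
      have : ec n A x 1 = 1 := by
        rw [ec, Finset.range_one, Finset.filter_singleton,
          if_pos ⟨by simpa using hx, by
            have e : x + ((0 : ℕ) : ZMod n) + 1 = x + ((1 : ℕ) : ZMod n) := by push_cast; ring
            rw [e]; exact hxk⟩]
        simp
      omega
    | (k + 2), hkn =>
      have hg : IsGap n A x (k + 2) :=
        ⟨by omega, hkn, hx, hxk, fun m hm1 hm2 => hsp m hm1 hm2⟩
      have hev := Nat.even_iff.mp (hA.2 x (k + 2) hg)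
      have h0 : ec n A x (k + 2) = 0 := by
        rw [ec, Finset.card_eq_zero, Finset.filter_eq_empty_iff]
        intro m hm
        rw [Finset.mem_range] at hm
        rintro ⟨h1, h2⟩
        rcases Nat.eq_zero_or_pos m with rfl | hm0
        · have e : x + ((0 : ℕ) : ZMod n) + 1 = x + ((1 : ℕ) : ZMod n) := by push_cast; ring
          rw [e] at h2
          exact hsp 1 (by omega) (by omega) h2
        · exact hsp m hm0 (by omega) h1
      omega

lemma ec_cycle (n : ℕ) (hn : 3 ≤ n) (A : Set (ZMod n)) (x y : ZMod n) :
    ec n A x n = ec n A y n := by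
  classical
  haveI : NeZero n := ⟨by omega⟩
  suffices H : ∀ z : ZMod n,
      ec n A z n = (Finset.univ.filter (fun v : ZMod n => v ∈ A ∧ v + 1 ∈ A)).card by
    rw [H x, H y]
  intro z
  rw [ec]
  refine Finset.card_bij (fun m _ => z + (m : ZMod n)) ?_ ?_ ?_
  · intro a ha
    rw [Finset.mem_filter] at ha ⊢
    exact ⟨Finset.mem_univ _, ha.2⟩
  · intro a ha b hb hab
    rw [Finset.mem_filter, Finset.mem_range] at ha hb
    have h2 : ((a : ℕ) : ZMod n) = ((b : ℕ) : ZMod n) := add_left_cancel hab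
    have h3 := congrArg ZMod.val h2
    rwa [ZMod.val_cast_of_lt ha.1, ZMod.val_cast_of_lt hb.1] at h3
  · intro b hb
    rw [Finset.mem_filter] at hb
    refine ⟨(b - z).val, ?_, ?_⟩
    · rw [Finset.mem_filter, Finset.mem_range]
      have e : z + (((b - z).val : ℕ) : ZMod n) = b := by
        rw [ZMod.natCast_rightInverse (b - z)]; ring
      rw [e]
      exact ⟨ZMod.val_lt _, hb.2⟩
    · show z + (((b - z).val : ℕ) : ZMod n) = b
      rw [ZMod.natCast_rightInverse (b - z)]; ring

lemma tc_self (n : ℕ) (A : Set (ZMod n)) (x : ZMod n) : tc n A x x = 0 := by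
  simp [tc]

lemma tc_triangle (n : ℕ) (A : Set (ZMod n)) (x z y : ZMod n) :
    (tc n A x z + tc n A z y) % 2 = tc n A x y % 2 := by
  classical
  unfold tc
  by_cases h1 : x ∈ A <;> by_cases h2 : z ∈ A <;> by_cases h3 : y ∈ A <;>
    simp [h1, h2, h3]

open Classical in
lemma ec_one (n : ℕ) (A : Set (ZMod n)) (x : ZMod n) :
    ec n A x 1 = if x ∈ A ∧ x + 1 ∈ A then 1 else 0 := by
  classical
  simp only [ec, Finset.range_one, Finset.filter_singleton, Nat.cast_zero, add_zero]
  split <;> simp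

lemma ec_base0 (n : ℕ) (A : Set (ZMod n)) (x : ZMod n) (k : ℕ) (hk2 : 2 ≤ k)
    (hint : ∀ m : ℕ, 0 < m → m < k → x + (m : ZMod n) ∉ A) :
    ec n A x k = 0 := by
  classical
  rw [ec, Finset.card_eq_zero, Finset.filter_eq_empty_iff]
  intro m hm
  rw [Finset.mem_range] at hm
  rintro ⟨h1, h2⟩
  rcases Nat.eq_zero_or_pos m with rfl | hm0
  · have e : x + ((0 : ℕ) : ZMod n) + 1 = x + ((1 : ℕ) : ZMod n) := by push_cast; ring
    rw [e] at h2
    exact hint 1 (by omega) (by omega) h2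
  · exact hint m hm0 (by omega) h1

lemma U_lemma (n : ℕ) (hn : 3 ≤ n) (A B : Set (ZMod n)) (hA : IsNormal n A) (hB : IsNormal n B)
    (ε : ℕ) (hεle : ε ≤ 1) (hεAB : ε = 1 → A ∩ B = ∅)
    (hNo : ∀ (j : ZMod n) (l : ℕ), IsABGap n A B j l → l % 2 = ε) :
    ∀ k : ℕ, ∀ x : ZMod n, k ≤ n → x ∈ A ∪ B → x + (k : ZMod n) ∈ A ∪ B →
      (∀ m : ℕ, 0 < m → m < k → x + (m : ZMod n) ∉ A ∩ B) →
      (x ∈ A ∩ B → x + (k : ZMod n) ∈ A ∩ B → k ≠ 1) →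
      (k + ε * tc n A x (x + (k : ZMod n))) % 2 = (ec n A x k + ec n B x k) % 2 := by
  intro k
  induction k using Nat.strong_induction_on with
  | _ k IH =>
  intro x hkn hxU hyU hint hH
  classical
  by_cases hsp : ∃ p : ℕ, 0 < p ∧ p < k ∧ x + (p : ZMod n) ∈ A ∪ B
  · obtain ⟨p, hp0, hpk, hpU⟩ := hsp
    have hzy : x + (p : ZMod n) + ((k - p : ℕ) : ZMod n) = x + (k : ZMod n) := by
      rw [add_assoc, ← Nat.cast_add]; congr 2; omega
    have hznAB : x + (p : ZMod n) ∉ A ∩ B := hint p hp0 hpk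
    have I1 := IH p hpk x (by omega) hxU hpU (fun m h1 h2 => hint m h1 (by omega))
      (fun _ h => absurd h hznAB)
    have I2 := IH (k - p) (by omega) (x + (p : ZMod n)) (by omega) hpU
      (by rw [hzy]; exact hyU)
      (fun m h1 h2 => by
        have e : x + (p : ZMod n) + (m : ZMod n) = x + ((p + m : ℕ) : ZMod n) := by
          push_cast; ring
        rw [e]; exact hint (p + m) (by omega) (by omega))
      (fun h _ => absurd h hznAB)
    rw [hzy] at I2
    have EA := ec_add n A x p (k - p)
    have EB := ec_add n B x p (k - p)
    rw [show p + (k - p) = k from by omega] at EA EB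
    have T : Nat.ModEq 2
        (tc n A x (x + (p : ZMod n)) + tc n A (x + (p : ZMod n)) (x + (k : ZMod n)))
        (tc n A x (x + (k : ZMod n))) := tc_triangle n A _ _ _
    have T2 := T.mul_left ε
    rw [Nat.mul_add] at T2
    unfold Nat.ModEq at T2
    set u1 := ε * tc n A x (x + (p : ZMod n)) with hu1
    set u2 := ε * tc n A (x + (p : ZMod n)) (x + (k : ZMod n)) with hu2
    set u3 := ε * tc n A x (x + (k : ZMod n)) with hu3
    omega
  · push_neg at hsp
    have hintA : ∀ m : ℕ, 0 < m → m < k → x + (m : ZMod n) ∉ A :=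
      fun m h1 h2 h3 => hsp m h1 h2 (Or.inl h3)
    have hintB : ∀ m : ℕ, 0 < m → m < k → x + (m : ZMod n) ∉ B :=
      fun m h1 h2 h3 => hsp m h1 h2 (Or.inr h3)
    rcases Nat.eq_zero_or_pos k with rfl | hk1
    · have e : x + ((0 : ℕ) : ZMod n) = x := by push_cast; ring
      rw [e, tc_self, ec_zero, ec_zero]
      simp
    have e1 : x + ((1 : ℕ) : ZMod n) = x + 1 := by push_cast; ring
    by_cases hxA : x ∈ A <;> by_cases hyA : x + (k : ZMod n) ∈ A
    · -- both ends in A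
      have ht : tc n A x (x + (k : ZMod n)) = 0 := by
        rw [tc, if_pos (iff_of_true hxA hyA)]
      rcases Nat.lt_or_ge k 2 with hk2 | hk2
      · obtain rfl : k = 1 := by omega
        have hyA1 : x + 1 ∈ A := by rwa [e1] at hyA
        have hecA : ec n A x 1 = 1 := by rw [ec_one, if_pos ⟨hxA, hyA1⟩]
        have hecB : ec n B x 1 = 0 := by
          rw [ec_one, if_neg]
          rintro ⟨h1, h2⟩
          exact hH ⟨hxA, h1⟩ ⟨by rwa [e1], by rwa [e1]⟩ rfl
        rw [e1] at ht
        simp [e1, ht, hecA, hecB]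
      · have hgap : IsGap n A x k := ⟨hk2, hkn, hxA, hyA, hintA⟩
        have hev := Nat.even_iff.mp (hA.2 x k hgap)
        rw [ht, ec_base0 n A x k hk2 hintA, ec_base0 n B x k hk2 hintB]
        omega
    · -- x ∈ A, y ∉ A (so y ∈ B)
      have hyB : x + (k : ZMod n) ∈ B := by rcases hyU with h | h; exact absurd h hyA; exact h
      have ht : tc n A x (x + (k : ZMod n)) = 1 := by
        rw [tc, if_neg (by tauto)]
      by_cases hxB : x ∈ B
      · have hε0 : ε = 0 := by
          rcases (by omega : ε = 0 ∨ ε = 1) with h | h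
          · exact h
          · exact (Set.eq_empty_iff_forall_notMem.mp (hεAB h) x ⟨hxA, hxB⟩).elim
        rcases Nat.lt_or_ge k 2 with hk2 | hk2
        · obtain rfl : k = 1 := by omega
          have hecB : ec n B x 1 = 1 := by rw [ec_one, if_pos ⟨hxB, by rwa [e1] at hyB⟩]
          have hecA : ec n A x 1 = 0 := by
            rw [ec_one, if_neg]
            rintro ⟨-, h2⟩
            exact hyA (by rwa [e1])
          rw [e1] at ht
          simp [e1, ht, hecA, hecB, hε0]
        · have hgap : IsGap n B x k := ⟨hk2, hkn, hxB, hyB, hintB⟩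
          have hev := Nat.even_iff.mp (hB.2 x k hgap)
          rw [ht, ec_base0 n A x k hk2 hintA, ec_base0 n B x k hk2 hintB, hε0]
          omega
      · -- mixed: x ∈ A \ B, y ∈ B \ A
        have hkltn : k < n := by
          rcases eq_or_lt_of_le hkn with h | h
          · exfalso; apply hyA; rw [h, ZMod.natCast_self, add_zero]; exact hxA
          · exact h
        have hgap : IsABGap n A B x k := by
          refine ⟨hkltn, Or.inl ⟨hxA, hyB, ?_, ?_⟩⟩
          · intro m hmk hmem
            rcases Nat.eq_zero_or_pos m with rfl | hm0
            · rfl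
            rcases eq_or_lt_of_le hmk with rfl | hlt
            · exact absurd hmem hyA
            · exact absurd hmem (hintA m hm0 hlt)
          · intro m hmk hmem
            rcases eq_or_lt_of_le hmk with rfl | hlt
            · rfl
            rcases Nat.eq_zero_or_pos m with rfl | hm0
            · exact absurd (by simpa using hmem) hxB
            · exact absurd hmem (hintB m hm0 hlt)
        have hparity := hNo x k hgap
        rcases Nat.lt_or_ge k 2 with hk2 | hk2
        · obtain rfl : k = 1 := by omega
          have hecA : ec n A x 1 = 0 := by
            rw [ec_one, if_neg]; rintro ⟨-, h2⟩; exact hyA (by rwa [e1])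
          have hecB : ec n B x 1 = 0 := by
            rw [ec_one, if_neg]; rintro ⟨h1, -⟩; exact hxB h1
          rw [ht, hecA, hecB]
          omega
        · rw [ht, ec_base0 n A x k hk2 hintA, ec_base0 n B x k hk2 hintB]
          omega
    · -- x ∉ A (so x ∈ B), y ∈ A
      have hxB : x ∈ B := by rcases hxU with h | h; exact absurd h hxA; exact h
      have ht : tc n A x (x + (k : ZMod n)) = 1 := by
        rw [tc, if_neg (by tauto)]
      by_cases hyB : x + (k : ZMod n) ∈ B
      · have hε0 : ε = 0 := by
          rcases (by omega : ε = 0 ∨ ε = 1) with h | h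
          · exact h
          · exact (Set.eq_empty_iff_forall_notMem.mp (hεAB h) _ ⟨hyA, hyB⟩).elim
        rcases Nat.lt_or_ge k 2 with hk2 | hk2
        · obtain rfl : k = 1 := by omega
          have hecB : ec n B x 1 = 1 := by rw [ec_one, if_pos ⟨hxB, by rwa [e1] at hyB⟩]
          have hecA : ec n A x 1 = 0 := by
            rw [ec_one, if_neg]; rintro ⟨h1, -⟩; exact hxA h1
          rw [e1] at ht
          simp [e1, ht, hecA, hecB, hε0]
        · have hgap : IsGap n B x k := ⟨hk2, hkn, hxB, hyB, hintB⟩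
          have hev := Nat.even_iff.mp (hB.2 x k hgap)
          rw [ht, ec_base0 n A x k hk2 hintA, ec_base0 n B x k hk2 hintB, hε0]
          omega
      · -- mixed reversed: x ∈ B \ A, y ∈ A \ B
        have hkltn : k < n := by
          rcases eq_or_lt_of_le hkn with h | h
          · exfalso; apply hyB; rw [h, ZMod.natCast_self, add_zero]; exact hxB
          · exact h
        have hgap : IsABGap n A B x k := by
          refine ⟨hkltn, Or.inr ⟨hxB, hyA, ?_, ?_⟩⟩
          · intro m hmk hmem
            rcases Nat.eq_zero_or_pos m with rfl | hm0
            · rfl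
            rcases eq_or_lt_of_le hmk with rfl | hlt
            · exact absurd hmem hyB
            · exact absurd hmem (hintB m hm0 hlt)
          · intro m hmk hmem
            rcases eq_or_lt_of_le hmk with rfl | hlt
            · rfl
            rcases Nat.eq_zero_or_pos m with rfl | hm0
            · exact absurd (by simpa using hmem) hxA
            · exact absurd hmem (hintA m hm0 hlt)
        have hparity := hNo x k hgap
        rcases Nat.lt_or_ge k 2 with hk2 | hk2
        · obtain rfl : k = 1 := by omega
          have hecA : ec n A x 1 = 0 := by
            rw [ec_one, if_neg]; rintro ⟨h1, -⟩; exact hxA h1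
          have hecB : ec n B x 1 = 0 := by
            rw [ec_one, if_neg]; rintro ⟨-, h2⟩; exact hyB (by rwa [e1])
          rw [ht, hecA, hecB]
          omega
        · rw [ht, ec_base0 n A x k hk2 hintA, ec_base0 n B x k hk2 hintB]
          omega
    · -- both ends in B (neither in A)
      have hxB : x ∈ B := by rcases hxU with h | h; exact absurd h hxA; exact h
      have hyB : x + (k : ZMod n) ∈ B := by rcases hyU with h | h; exact absurd h hyA; exact h
      have ht : tc n A x (x + (k : ZMod n)) = 0 := by
        rw [tc, if_pos (iff_of_false hxA hyA)]
      rcases Nat.lt_or_ge k 2 with hk2 | hk2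
      · obtain rfl : k = 1 := by omega
        have hecB : ec n B x 1 = 1 := by rw [ec_one, if_pos ⟨hxB, by rwa [e1] at hyB⟩]
        have hecA : ec n A x 1 = 0 := by
          rw [ec_one, if_neg]; rintro ⟨h1, -⟩; exact hxA h1
        rw [e1] at ht
        simp [e1, ht, hecA, hecB]
      · have hgap : IsGap n B x k := ⟨hk2, hkn, hxB, hyB, hintB⟩
        have hev := Nat.even_iff.mp (hB.2 x k hgap)
        rw [ht, ec_base0 n A x k hk2 hintA, ec_base0 n B x k hk2 hintB]
        omega

def Strand (n : ℕ) (A B : Set (ZMod n)) (i : ZMod n) (k : ℕ) : Prop :=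
  k < n ∧ i ∈ A ∧ i + (k : ZMod n) ∈ B ∧
    (∀ m : ℕ, m ≤ k → i + (m : ZMod n) ∈ A → m = 0) ∧
    (∀ m : ℕ, m ≤ k → i + (m : ZMod n) ∈ B → m = k)

lemma isABGap_iff_strand (n : ℕ) (A B : Set (ZMod n)) (i : ZMod n) (k : ℕ) :
    IsABGap n A B i k ↔ Strand n A B i k ∨ Strand n B A i k := by
  unfold IsABGap Strand
  tauto

lemma core (n : ℕ) (hn : 3 ≤ n) (A B : Set (ZMod n)) (hA : IsNormal n A) (hB : IsNormal n B)
    (i : ZMod n) (k : ℕ) (j : ZMod n) (l : ℕ) (hP : Strand n A B i k) (hk : Odd k)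
    (hQ : IsABGap n A B j l) (hl : Even l) (m m' : ℕ) (hm : m ≤ k) (hm' : m' ≤ l)
    (hv : i + (m : ZMod n) = j + (m' : ZMod n)) : False := by
  obtain ⟨hkn, hiA, hikB, hPA, hPB⟩ := hP
  have hk1 : 1 ≤ k := hk.pos
  have hk2 : k % 2 = 1 := Nat.odd_iff.mp hk
  have hl2' : l % 2 = 0 := Nat.even_iff.mp hl
  rcases Nat.eq_zero_or_pos l with rfl | hl1
  · -- Q is a single vertex of A ∩ B
    have hm'0 : m' = 0 := by omega
    subst hm'0
    have e0 : j + ((0 : ℕ) : ZMod n) = j := by push_cast; ring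
    have hj : j ∈ A ∧ j ∈ B := by
      rcases hQ.2 with ⟨h1, h2, -, -⟩ | ⟨h1, h2, -, -⟩
      · exact ⟨h1, by rwa [e0] at h2⟩
      · exact ⟨by rwa [e0] at h2, h1⟩
    have e1 : i + (m : ZMod n) = j := by rw [hv, e0]
    have h1 := hPA m hm (by rw [e1]; exact hj.1)
    have h2 := hPB m hm (by rw [e1]; exact hj.2)
    omega
  have hl2 : 2 ≤ l := by omega
  obtain ⟨hln, hQ2⟩ := hQ
  rcases hQ2 with ⟨hjA, hjlB, hQA, hQB⟩ | ⟨hjB, hjlA, hQB0, hQAl⟩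
  · -- Q1: same orientation; derive i = j
    have hij : i = j := by
      rcases le_or_gt m m' with h | h
      · obtain ⟨d, hd⟩ : ∃ d, d + m = m' := ⟨m' - m, by omega⟩
        have hdc : ((d : ℕ) : ZMod n) + ((m : ℕ) : ZMod n) = ((m' : ℕ) : ZMod n) := by
          rw [← Nat.cast_add, hd]
        have e : j + ((d : ℕ) : ZMod n) = i := by
          linear_combination hdc - hv
        have h0 := hQA d (by omega) (by rw [e]; exact hiA)
        subst h0
        simp only [Nat.cast_zero, add_zero] at e
        exact e.symm
      · obtain ⟨d, hd⟩ : ∃ d, d + m' = m := ⟨m - m', by omega⟩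
        have hdc : ((d : ℕ) : ZMod n) + ((m' : ℕ) : ZMod n) = ((m : ℕ) : ZMod n) := by
          rw [← Nat.cast_add, hd]
        have e : i + ((d : ℕ) : ZMod n) = j := by
          linear_combination hv + hdc
        have h0 := hPA d (by omega) (by rw [e]; exact hjA)
        subst h0
        simp only [Nat.cast_zero, add_zero] at e
        exact e
    rcases le_or_gt k l with h | h
    · have h0 := hQB k h (by rw [← hij]; exact hikB)
      omega
    · have h0 := hPB l (by omega) (by rw [hij]; exact hjlB)
      omega
  · -- Q2: opposite orientation
    by_cases hm0 : m = 0
    · -- shared vertex is i, the A-end of P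
      subst hm0
      have hi' : i = j + ((m' : ℕ) : ZMod n) := by
        simpa using hv
      have hm'l : m' = l := hQAl m' hm' (by rw [← hi']; exact hiA)
      subst hm'l
      rcases le_or_gt (m' + k) n with hs | hs
      · have hgap : IsGap n B j (m' + k) := by
          refine ⟨by omega, hs, hjB, ?_, ?_⟩
          · have e : j + ((m' + k : ℕ) : ZMod n) = i + (k : ZMod n) := by
              rw [hi']; push_cast; ring
            rw [e]; exact hikB
          · intro t ht0 htlk
            rcases le_or_gt t m' with htl | htl
            · intro hmem
              have := hQB0 t htl hmem
              omega
            · obtain ⟨d, hd⟩ : ∃ d, m' + d = t := ⟨t - m', by omega⟩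
              have e : j + ((t : ℕ) : ZMod n) = i + ((d : ℕ) : ZMod n) := by
                rw [hi', ← hd]; push_cast; ring
              rw [e]
              intro hmem
              have := hPB d (by omega) hmem
              omega
        have := Nat.even_iff.mp (hB.2 j (m' + k) hgap)
        omega
      · -- wrap around
        have e1 : ((m' + k - n : ℕ) : ZMod n) = ((m' : ℕ) : ZMod n) + ((k : ℕ) : ZMod n) := by
          have h2 : ((m' + k - n) + n : ℕ) = (m' + k : ℕ) := by omega
          calc ((m' + k - n : ℕ) : ZMod n)
              = ((m' + k - n : ℕ) : ZMod n) + ((n : ℕ) : ZMod n) := by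
                rw [ZMod.natCast_self, add_zero]
            _ = (((m' + k - n) + n : ℕ) : ZMod n) := by rw [Nat.cast_add]
            _ = ((m' + k : ℕ) : ZMod n) := by rw [h2]
            _ = ((m' : ℕ) : ZMod n) + ((k : ℕ) : ZMod n) := by push_cast; ring
        have e : j + ((m' + k - n : ℕ) : ZMod n) = i + (k : ZMod n) := by
          rw [e1, hi']; ring
        have := hQB0 (m' + k - n) (by omega) (by rw [e]; exact hikB)
        omega
    · by_cases hmk : m = k
      · -- shared vertex is i + k, the B-end of P
        subst hmk
        have h0 := hQB0 m' hm' (by rw [← hv]; exact hikB)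
        subst h0
        have hik' : i + ((m : ℕ) : ZMod n) = j := by simpa using hv
        rcases le_or_gt (m + l) n with hs | hs
        · have hgap : IsGap n A i (m + l) := by
            refine ⟨by omega, hs, hiA, ?_, ?_⟩
            · have e : i + ((m + l : ℕ) : ZMod n) = j + ((l : ℕ) : ZMod n) := by
                rw [← hik']; push_cast; ring
              rw [e]; exact hjlA
            · intro t ht0 htlk
              rcases le_or_gt t m with htl | htl
              · intro hmem
                have := hPA t (by omega) hmem
                omega
              · obtain ⟨d, hd⟩ : ∃ d, m + d = t := ⟨t - m, by omega⟩
                have e : i + ((t : ℕ) : ZMod n) = j + ((d : ℕ) : ZMod n) := by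
                  rw [← hik', ← hd]; push_cast; ring
                rw [e]
                intro hmem
                have := hQAl d (by omega) hmem
                omega
          have := Nat.even_iff.mp (hA.2 i (m + l) hgap)
          omega
        · have e1 : ((m + l - n : ℕ) : ZMod n) = ((m : ℕ) : ZMod n) + ((l : ℕ) : ZMod n) := by
            have h2 : ((m + l - n) + n : ℕ) = (m + l : ℕ) := by omega
            calc ((m + l - n : ℕ) : ZMod n)
                = ((m + l - n : ℕ) : ZMod n) + ((n : ℕ) : ZMod n) := by
                  rw [ZMod.natCast_self, add_zero]
              _ = (((m + l - n) + n : ℕ) : ZMod n) := by rw [Nat.cast_add]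
              _ = ((m + l : ℕ) : ZMod n) := by rw [h2]
              _ = ((m : ℕ) : ZMod n) + ((l : ℕ) : ZMod n) := by push_cast; ring
          have e : i + ((m + l - n : ℕ) : ZMod n) = j + ((l : ℕ) : ZMod n) := by
            rw [e1, ← hik']; ring
          have := hPA (m + l - n) (by omega) (by rw [e]; exact hjlA)
          omega
      · -- shared vertex interior to P
        have hm0' : 0 < m := by omega
        have hmk' : m < k := by omega
        rcases le_or_gt (m' + (k - m)) l with hs | hs
        · obtain ⟨d, hd⟩ : ∃ d, m + d = k := ⟨k - m, by omega⟩
          have e : j + ((m' + d : ℕ) : ZMod n) = i + ((k : ℕ) : ZMod n) := by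
            rw [← hd]; push_cast; linear_combination -hv
          have := hQB0 (m' + d) (by omega) (by rw [e]; exact hikB)
          omega
        · obtain ⟨d, hd⟩ : ∃ d, m' + d = l := ⟨l - m', by omega⟩
          have e : i + ((m + d : ℕ) : ZMod n) = j + ((l : ℕ) : ZMod n) := by
            rw [← hd]; push_cast; linear_combination hv
          have := hPA (m + d) (by omega) (by rw [e]; exact hjlA)
          omega

end ABG

/-- for normal sets `A, B` in an odd cycle (on `ZMod n`), every odd
`(A,B)`-gap is vertex-disjoint from every even one; moreover if `A ∩ B` is not
normal then there is both an odd `(A,B)`-gap and an even one. -/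
theorem odd_even_ABGaps (n : ℕ) (hn : 3 ≤ n) (hodd : Odd n) (A B : Set (ZMod n))
    (hA : IsNormal n A) (hB : IsNormal n B) :
    (∀ (i : ZMod n) (k : ℕ) (j : ZMod n) (l : ℕ),
      IsABGap n A B i k → Odd k → IsABGap n A B j l → Even l →
      Disjoint (gapVerts n i k) (gapVerts n j l)) ∧
    (¬ IsNormal n (A ∩ B) →
      (∃ (i : ZMod n) (k : ℕ), IsABGap n A B i k ∧ Odd k) ∧
      (∃ (i : ZMod n) (k : ℕ), IsABGap n A B i k ∧ Even k)) := by
  constructor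
  · intro i k j l hP hk hQ hl
    rw [Set.disjoint_left]
    rintro v ⟨m, hm, rfl⟩ ⟨m', hm', hv⟩
    rcases (isABGap_iff_strand n A B i k).mp hP with h | h
    · exact core n hn A B hA hB i k j l h hk hQ hl m m' hm hm' hv
    · exact core n hn B A hB hA i k j l h hk ⟨hQ.1, hQ.2.symm⟩ hl m m' hm hm' hv
  · intro hnab
    have hn2 : n % 2 = 1 := Nat.odd_iff.mp hodd
    have hane : ∃ a, a ∈ A := by
      by_contra h
      push_neg at h
      have h2 := hA.1 (Set.eq_empty_iff_forall_notMem.mpr h)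
      rw [Nat.even_iff] at h2
      omega
    have hbne : ∃ b, b ∈ B := by
      by_contra h
      push_neg at h
      have h2 := hB.1 (Set.eq_empty_iff_forall_notMem.mpr h)
      rw [Nat.even_iff] at h2
      omega
    obtain ⟨a, ha⟩ := hane
    obtain ⟨b, hb⟩ := hbne
    have ean : a + ((n : ℕ) : ZMod n) = a := by rw [ZMod.natCast_self, add_zero]
    rw [IsNormal, not_and_or] at hnab
    rcases hnab with h1 | h2
    · push_neg at h1
      obtain ⟨hABe, -⟩ := h1
      have key : ∀ ε : ℕ, ε ≤ 1 →
          (∀ (j' : ZMod n) (l : ℕ), IsABGap n A B j' l → l % 2 = ε) → False := by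
        intro ε hεle hNo
        have U0 := U_lemma n hn A B hA hB ε hεle (fun _ => hABe) hNo n a le_rfl
          (Or.inl ha) (by rw [ean]; exact Or.inl ha)
          (fun m h1 h2 => by rw [hABe]; exact Set.notMem_empty _)
          (fun h => absurd h (by rw [hABe]; exact Set.notMem_empty _))
        rw [ean, tc_self, Nat.mul_zero] at U0
        have LA := ec_parity n A hA n a le_rfl ha (by rw [ean]; exact ha)
        have LB := ec_parity n B hB n b le_rfl hb
          (by rw [ZMod.natCast_self, add_zero]; exact hb)
        have RB : ec n B a n = ec n B b n := ec_cycle n hn B a b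
        omega
      constructor
      · by_contra hno
        push_neg at hno
        exact key 0 (by omega) (fun j' l hg => by
          have := hno j' l hg; rw [Nat.odd_iff] at this; omega)
      · by_contra hno
        push_neg at hno
        exact key 1 (by omega) (fun j' l hg => by
          have := hno j' l hg; rw [Nat.even_iff] at this; omega)
    · push_neg at h2
      obtain ⟨x, k, hg, hkodd⟩ := h2
      have hk2' : k % 2 = 1 := by rw [Nat.even_iff] at hkodd; omega
      obtain ⟨hgk2, hgkn, hgx, hgxk, hgint⟩ := hg
      refine ⟨?_, ⟨x, 0, ?_, Even.zero⟩⟩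
      · by_contra hno
        push_neg at hno
        have hNo : ∀ (j' : ZMod n) (l : ℕ), IsABGap n A B j' l → l % 2 = 0 :=
          fun j' l hgap => by
            have := hno j' l hgap; rw [Nat.odd_iff] at this; omega
        have U0 := U_lemma n hn A B hA hB 0 (by omega)
          (fun h => absurd h (by omega)) hNo k x hgkn
          (Or.inl hgx.1) (Or.inl hgxk.1) hgint (fun _ _ => by omega)
        have ht0 : tc n A x (x + (k : ZMod n)) = 0 := by
          rw [tc, if_pos (iff_of_true hgx.1 hgxk.1)]
        rw [ht0, Nat.mul_zero] at U0
        have LA := ec_parity n A hA k x hgkn hgx.1 hgxk.1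
        have LB := ec_parity n B hB k x hgkn hgx.2 hgxk.2
        omega
      · refine ⟨by omega, Or.inl ⟨hgx.1, ?_, ?_, ?_⟩⟩
        · have e : x + ((0 : ℕ) : ZMod n) = x := by push_cast; ring
          rw [e]; exact hgx.2
        · intro m hm _; omega
        · intro m hm _; omega
end

section
/- Let C be an odd cycle, and let A1,…,Ak ⊆ V(C) all be normal in C, such that for all 1 ≤ i < j ≤ k, every (Ai,Aj)-gap is even. Then A1 ∩ ⋯ ∩ Ak is normal in C. -/
variable {V : Type*}

open Classical in
/-- number of edges (m, m+1), m < L, of the path starting at `i` of length `L`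
whose both ends lie in `W`. -/
noncomputable def edgeCount (n : ℕ) (W : Set (ZMod n)) (i : ZMod n) (L : ℕ) : ℕ :=
  ((Finset.range L).filter
    (fun m : ℕ => (i + (m : ZMod n)) ∈ W ∧ (i + (m : ZMod n) + 1) ∈ W)).card

open Classical

lemma edgeCount_zero (n : ℕ) (W : Set (ZMod n)) (i : ZMod n) :
    edgeCount n W i 0 = 0 := by
  simp [edgeCount]

lemma edgeCount_succ (n : ℕ) (W : Set (ZMod n)) (i : ZMod n) (L : ℕ) :
    edgeCount n W i (L + 1) = edgeCount n W i L +
      (if (i + (L : ZMod n)) ∈ W ∧ (i + (L : ZMod n) + 1) ∈ W then 1 else 0) := by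
  unfold edgeCount
  rw [Finset.range_add_one, Finset.filter_insert]
  split <;> simp [Finset.card_insert_of_notMem]

lemma edgeCount_add (n : ℕ) (W : Set (ZMod n)) (i : ZMod n) (a b : ℕ) :
    edgeCount n W i (a + b) = edgeCount n W i a + edgeCount n W (i + (a : ZMod n)) b := by
  induction b with
  | zero => simp [edgeCount_zero]
  | succ b ih =>
      rw [← Nat.add_assoc, edgeCount_succ, ih, edgeCount_succ]
      have : i + ((a + b : ℕ) : ZMod n) = i + (a : ZMod n) + (b : ZMod n) := by
        push_cast; ring
      rw [this, Nat.add_assoc]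

lemma edgeCount_union (n : ℕ) (W X Y : Set (ZMod n)) (i : ZMod n) (L : ℕ)
    (h1 : ∀ m, m < L → ((i + (m : ZMod n)) ∈ W ∧ (i + (m : ZMod n) + 1) ∈ W ↔
      ((i + (m : ZMod n)) ∈ X ∧ (i + (m : ZMod n) + 1) ∈ X) ∨
      ((i + (m : ZMod n)) ∈ Y ∧ (i + (m : ZMod n) + 1) ∈ Y)))
    (h2 : ∀ m, m < L → ¬(((i + (m : ZMod n)) ∈ X ∧ (i + (m : ZMod n) + 1) ∈ X) ∧
      ((i + (m : ZMod n)) ∈ Y ∧ (i + (m : ZMod n) + 1) ∈ Y))) :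
    edgeCount n W i L = edgeCount n X i L + edgeCount n Y i L := by
  unfold edgeCount
  rw [Finset.filter_congr (fun m hm => h1 m (Finset.mem_range.mp hm)), Finset.filter_or,
    Finset.card_union_of_disjoint]
  rw [Finset.disjoint_filter]
  exact fun m hm hx hy => h2 m (Finset.mem_range.mp hm) ⟨hx, hy⟩

/-- Parity lemma: along a path of length `L ≤ n` with both endpoints in a set `W`
all of whose gaps are even, the length is congruent mod 2 to the number of edges
inside `W`. -/
lemma parity (n : ℕ) (W : Set (ZMod n))
    (hW : ∀ (i : ZMod n) (k : ℕ), IsGap n W i k → Even k) :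
    ∀ L : ℕ, ∀ i : ZMod n, L ≤ n → i ∈ W → i + (L : ZMod n) ∈ W →
      L % 2 = edgeCount n W i L % 2 := by
  intro L
  induction L using Nat.strong_induction_on with
  | _ L IH =>
  intro i hLn hi hiL
  rcases Nat.eq_zero_or_pos L with h0 | hL
  · subst h0; simp [edgeCount_zero]
  · have hex : ∃ m, 0 < m ∧ m ≤ L ∧ i + (m : ZMod n) ∈ W := ⟨L, hL, le_rfl, hiL⟩
    set d := Nat.find hex with hd
    obtain ⟨hd0, hdL, hdW⟩ := Nat.find_spec hex
    have hmin : ∀ m, m < d → ¬(0 < m ∧ m ≤ L ∧ i + (m : ZMod n) ∈ W) :=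
      fun m hm => Nat.find_min hex hm
    have hsplit : L = d + (L - d) := (Nat.add_sub_cancel' hdL).symm
    have hcast : ((d : ℕ) : ZMod n) + ((L - d : ℕ) : ZMod n) = (L : ZMod n) := by
      rw [← Nat.cast_add, Nat.add_sub_cancel' hdL]
    have hiLd : (i + (d : ZMod n)) + ((L - d : ℕ) : ZMod n) ∈ W := by
      rw [add_assoc, hcast]; exact hiL
    have htail : (L - d) % 2 = edgeCount n W (i + (d : ZMod n)) (L - d) % 2 :=
      IH (L - d) (by omega) _ (by omega) hdW hiLd
    rw [hsplit, edgeCount_add]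
    rcases Nat.lt_or_ge d 2 with hd2 | hd2
    · -- d = 1
      have hd1 : d = 1 := by omega
      have hdW1 : i + (1 : ZMod n) ∈ W := by
        have h := hdW; rw [← hd, hd1] at h
        simpa using h
      have h1 : edgeCount n W i d = 1 := by
        rw [hd1]
        simp only [edgeCount, Finset.range_one, Finset.filter_singleton]
        simp [hi, hdW1]
      omega
    · -- d ≥ 2 : gap
      have hgap : IsGap n W i d := by
        refine ⟨hd2, le_trans hdL hLn, hi, hdW, ?_⟩
        intro m hm1 hm2 hmW
        exact hmin m hm2 ⟨hm1, by omega, hmW⟩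
      have hdev : Even d := hW i d hgap
      have h0 : edgeCount n W i d = 0 := by
        unfold edgeCount
        rw [Finset.card_eq_zero, Finset.filter_eq_empty_iff]
        intro m hm
        rw [Finset.mem_range] at hm
        rcases Nat.eq_zero_or_pos m with rfl | hm0
        · intro hc
          have h1W : i + ((1 : ℕ) : ZMod n) ∈ W := by
            have : ((1 : ℕ) : ZMod n) = (1 : ZMod n) := by push_cast; ring
            rw [this]
            simpa using hc.2
          exact hmin 1 (by omega) ⟨by omega, by omega, h1W⟩
        · intro hc
          exact hmin m hm ⟨hm0, by omega, hc.1⟩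
      rw [h0]
      obtain ⟨t, ht⟩ := hdev
      omega

lemma edgeCount_rotate (n : ℕ) (hn : 0 < n) (W : Set (ZMod n)) (x y : ZMod n) :
    edgeCount n W x n = edgeCount n W y n := by
  haveI : NeZero n := ⟨by omega⟩
  set a := (y - x).val with ha
  have han : a < n := ZMod.val_lt _
  have hxa : x + (a : ZMod n) = y := by
    rw [ha, ZMod.natCast_val, ZMod.cast_id]; ring
  have h1 : edgeCount n W x n = edgeCount n W x a + edgeCount n W y (n - a) := by
    rw [← hxa, ← edgeCount_add, Nat.add_sub_cancel' han.le]
  have hyb : y + ((n - a : ℕ) : ZMod n) = x := by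
    rw [← hxa, add_assoc, ← Nat.cast_add, Nat.add_sub_cancel' han.le, ZMod.natCast_self,
      add_zero]
  have h2 : edgeCount n W y n = edgeCount n W y (n - a) + edgeCount n W x a := by
    have h3 := edgeCount_add n W y (n - a) a
    rw [hyb, Nat.sub_add_cancel han.le] at h3
    exact h3
  omega

lemma abgap_symm {n : ℕ} {S T : Set (ZMod n)}
    (h : ∀ (a : ZMod n) (l : ℕ), IsABGap n S T a l → Even l) :
    ∀ (a : ZMod n) (l : ℕ), IsABGap n T S a l → Even l :=
  fun a l hg => h a l ⟨hg.1, hg.2.symm⟩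

lemma edge_common_aux {n : ℕ} (hn : 3 ≤ n) {S T : Set (ZMod n)}
    (hST : ∀ (a : ZMod n) (l : ℕ), IsABGap n S T a l → Even l) {u : ZMod n}
    (hu : u ∈ S) (hv : u + 1 ∈ T) (hu' : u ∉ T) (hv' : u + 1 ∉ S) : False := by
  have hg : IsABGap n S T u 1 := by
    refine ⟨by omega, Or.inl ⟨hu, by simpa using hv, ?_, ?_⟩⟩
    · intro m hm hmS
      interval_cases m
      · rfl
      · exact absurd (by simpa using hmS) hv'
    · intro m hm hmT
      interval_cases m
      · exact absurd (by simpa using hmT) hu'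
      · rfl
  simpa using hST u 1 hg

lemma pair_common {n : ℕ} (hn : 3 ≤ n) {X Y : Set (ZMod n)}
    (hXY : ∀ (a : ZMod n) (l : ℕ), IsABGap n X Y a l → Even l) {u : ZMod n}
    (hu : u ∈ X ∪ Y) (hv : u + 1 ∈ X ∪ Y) :
    (u ∈ X ∧ u + 1 ∈ X) ∨ (u ∈ Y ∧ u + 1 ∈ Y) := by
  by_cases h1 : u ∈ X ∧ u + 1 ∈ X
  · exact Or.inl h1
  by_cases h2 : u ∈ Y ∧ u + 1 ∈ Y
  · exact Or.inr h2
  exfalso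
  rcases hu with huX | huY <;> rcases hv with hvX | hvY
  · exact h1 ⟨huX, hvX⟩
  · exact edge_common_aux hn hXY huX hvY (fun h => h2 ⟨h, hvY⟩) (fun h => h1 ⟨huX, h⟩)
  · exact edge_common_aux hn (abgap_symm hXY) huY hvX (fun h => h1 ⟨h, hvX⟩)
      (fun h => h2 ⟨huY, h⟩)
  · exact h2 ⟨huY, hvY⟩

lemma triple_common {n : ℕ} (hn : 3 ≤ n) {X Y Z : Set (ZMod n)}
    (hXY : ∀ (a : ZMod n) (l : ℕ), IsABGap n X Y a l → Even l)
    (hXZ : ∀ (a : ZMod n) (l : ℕ), IsABGap n X Z a l → Even l)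
    (hYZ : ∀ (a : ZMod n) (l : ℕ), IsABGap n Y Z a l → Even l) {u : ZMod n}
    (hu : u ∈ X ∪ Y ∪ Z) (hv : u + 1 ∈ X ∪ Y ∪ Z) :
    (u ∈ X ∧ u + 1 ∈ X) ∨ (u ∈ Y ∧ u + 1 ∈ Y) ∨ (u ∈ Z ∧ u + 1 ∈ Z) := by
  by_cases h1 : u ∈ X ∧ u + 1 ∈ X
  · exact Or.inl h1
  by_cases h2 : u ∈ Y ∧ u + 1 ∈ Y
  · exact Or.inr (Or.inl h2)
  by_cases h3 : u ∈ Z ∧ u + 1 ∈ Z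
  · exact Or.inr (Or.inr h3)
  exfalso
  rcases hu with (huX | huY) | huZ <;> rcases hv with (hvX | hvY) | hvZ
  · exact h1 ⟨huX, hvX⟩
  · exact edge_common_aux hn hXY huX hvY (fun h => h2 ⟨h, hvY⟩) (fun h => h1 ⟨huX, h⟩)
  · exact edge_common_aux hn hXZ huX hvZ (fun h => h3 ⟨h, hvZ⟩) (fun h => h1 ⟨huX, h⟩)
  · exact edge_common_aux hn (abgap_symm hXY) huY hvX (fun h => h1 ⟨h, hvX⟩)
      (fun h => h2 ⟨huY, h⟩)
  · exact h2 ⟨huY, hvY⟩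
  · exact edge_common_aux hn hYZ huY hvZ (fun h => h3 ⟨h, hvZ⟩) (fun h => h2 ⟨huY, h⟩)
  · exact edge_common_aux hn (abgap_symm hXZ) huZ hvX (fun h => h1 ⟨h, hvX⟩)
      (fun h => h3 ⟨huZ, h⟩)
  · exact edge_common_aux hn (abgap_symm hYZ) huZ hvY (fun h => h2 ⟨h, hvY⟩)
      (fun h => h3 ⟨huZ, h⟩)
  · exact h3 ⟨huZ, hvZ⟩

lemma cross_gap_even {n : ℕ} {S T : Set (ZMod n)}
    (hS : ∀ (i : ZMod n) (k : ℕ), IsGap n S i k → Even k)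
    (hT : ∀ (i : ZMod n) (k : ℕ), IsGap n T i k → Even k)
    (hST : ∀ (a : ZMod n) (l : ℕ), IsABGap n S T a l → Even l)
    (i : ZMod n) (k : ℕ) (hk2 : 2 ≤ k) (hkn : k ≤ n)
    (hiS : i ∈ S) (hikT : i + (k : ZMod n) ∈ T)
    (hint : ∀ m : ℕ, 0 < m → m < k → i + (m : ZMod n) ∉ S ∧ i + (m : ZMod n) ∉ T) :
    Even k := by
  by_cases hikS : i + (k : ZMod n) ∈ S
  · exact hS i k ⟨hk2, hkn, hiS, hikS, fun m h1 h2 => (hint m h1 h2).1⟩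
  by_cases hiT : i ∈ T
  · exact hT i k ⟨hk2, hkn, hiT, hikT, fun m h1 h2 => (hint m h1 h2).2⟩
  refine hST i k ⟨?_, Or.inl ⟨hiS, hikT, ?_, ?_⟩⟩
  · rcases Nat.lt_or_ge k n with h | h
    · exact h
    · exfalso
      have hkn' : k = n := by omega
      apply hiT
      have : ((k : ℕ) : ZMod n) = 0 := by rw [hkn', ZMod.natCast_self]
      rwa [this, add_zero] at hikT
  · intro m hm hmS
    rcases Nat.eq_zero_or_pos m with rfl | hm0
    · rfl
    · rcases Nat.lt_or_ge m k with h | h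
      · exact absurd hmS (hint m hm0 h).1
      · have : m = k := by omega
        subst this; exact absurd hmS hikS
  · intro m hm hmT
    rcases Nat.eq_zero_or_pos m with rfl | hm0
    · exact absurd (by simpa using hmT) hiT
    · rcases Nat.lt_or_ge m k with h | h
      · exact absurd hmT (hint m hm0 h).2
      · omega

lemma union2_gap {n : ℕ} {X Y : Set (ZMod n)}
    (hX : ∀ (i : ZMod n) (k : ℕ), IsGap n X i k → Even k)
    (hY : ∀ (i : ZMod n) (k : ℕ), IsGap n Y i k → Even k)
    (hXY : ∀ (a : ZMod n) (l : ℕ), IsABGap n X Y a l → Even l) :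
    ∀ (i : ZMod n) (k : ℕ), IsGap n (X ∪ Y) i k → Even k := by
  rintro i k ⟨hk2, hkn, hi, hik, hint⟩
  have hint' : ∀ m : ℕ, 0 < m → m < k →
      (i + (m : ZMod n) ∉ X ∧ i + (m : ZMod n) ∉ Y) := by
    intro m h1 h2
    have := hint m h1 h2
    exact ⟨fun h => this (Or.inl h), fun h => this (Or.inr h)⟩
  rcases hi with hiX | hiY <;> rcases hik with hikX | hikY
  · exact hX i k ⟨hk2, hkn, hiX, hikX, fun m h1 h2 => (hint' m h1 h2).1⟩
  · exact cross_gap_even hX hY hXY i k hk2 hkn hiX hikY hint'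
  · exact cross_gap_even hY hX (abgap_symm hXY) i k hk2 hkn hiY hikX
      (fun m h1 h2 => (hint' m h1 h2).symm)
  · exact hY i k ⟨hk2, hkn, hiY, hikY, fun m h1 h2 => (hint' m h1 h2).2⟩

lemma union3_gap {n : ℕ} {X Y Z : Set (ZMod n)}
    (hX : ∀ (i : ZMod n) (k : ℕ), IsGap n X i k → Even k)
    (hY : ∀ (i : ZMod n) (k : ℕ), IsGap n Y i k → Even k)
    (hZ : ∀ (i : ZMod n) (k : ℕ), IsGap n Z i k → Even k)
    (hXY : ∀ (a : ZMod n) (l : ℕ), IsABGap n X Y a l → Even l)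
    (hXZ : ∀ (a : ZMod n) (l : ℕ), IsABGap n X Z a l → Even l)
    (hYZ : ∀ (a : ZMod n) (l : ℕ), IsABGap n Y Z a l → Even l) :
    ∀ (i : ZMod n) (k : ℕ), IsGap n (X ∪ Y ∪ Z) i k → Even k := by
  rintro i k ⟨hk2, hkn, hi, hik, hint⟩
  have hI : ∀ m : ℕ, 0 < m → m < k →
      (i + (m : ZMod n) ∉ X ∧ i + (m : ZMod n) ∉ Y) ∧ i + (m : ZMod n) ∉ Z := by
    intro m h1 h2
    have := hint m h1 h2
    exact ⟨⟨fun h => this (Or.inl (Or.inl h)), fun h => this (Or.inl (Or.inr h))⟩,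
      fun h => this (Or.inr h)⟩
  rcases hi with (hiX | hiY) | hiZ <;> rcases hik with (hikX | hikY) | hikZ
  · exact hX i k ⟨hk2, hkn, hiX, hikX, fun m h1 h2 => (hI m h1 h2).1.1⟩
  · exact cross_gap_even hX hY hXY i k hk2 hkn hiX hikY
      (fun m h1 h2 => ⟨(hI m h1 h2).1.1, (hI m h1 h2).1.2⟩)
  · exact cross_gap_even hX hZ hXZ i k hk2 hkn hiX hikZ
      (fun m h1 h2 => ⟨(hI m h1 h2).1.1, (hI m h1 h2).2⟩)
  · exact cross_gap_even hY hX (abgap_symm hXY) i k hk2 hkn hiY hikX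
      (fun m h1 h2 => ⟨(hI m h1 h2).1.2, (hI m h1 h2).1.1⟩)
  · exact hY i k ⟨hk2, hkn, hiY, hikY, fun m h1 h2 => (hI m h1 h2).1.2⟩
  · exact cross_gap_even hY hZ hYZ i k hk2 hkn hiY hikZ
      (fun m h1 h2 => ⟨(hI m h1 h2).1.2, (hI m h1 h2).2⟩)
  · exact cross_gap_even hZ hX (abgap_symm hXZ) i k hk2 hkn hiZ hikX
      (fun m h1 h2 => ⟨(hI m h1 h2).2, (hI m h1 h2).1.1⟩)
  · exact cross_gap_even hZ hY (abgap_symm hYZ) i k hk2 hkn hiZ hikY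
      (fun m h1 h2 => ⟨(hI m h1 h2).2, (hI m h1 h2).1.2⟩)
  · exact hZ i k ⟨hk2, hkn, hiZ, hikZ, fun m h1 h2 => (hI m h1 h2).2⟩

lemma cast_add_nat {n : ℕ} (i : ZMod n) (a b c : ℕ) (h : a + b = c) :
    i + (a : ZMod n) + (b : ZMod n) = i + (c : ZMod n) := by
  rw [← h]; push_cast; ring

lemma cast_add_nat' {n : ℕ} (i : ZMod n) (a b c : ℕ) (h : a + b + 1 = c) :
    i + (a : ZMod n) + (b : ZMod n) + 1 = i + (c : ZMod n) := by
  rw [← h]; push_cast; ring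

/-- If the path from `i` (in `X`) to `i+L` (the unique vertex of `Z` on the path)
has `X`-gaps even and `(X,Z)`-gaps even, then the number of `X`-edges on it is
congruent to `L`. -/
lemma tail_parity_last {n : ℕ} {X Z : Set (ZMod n)}
    (hX : ∀ (i : ZMod n) (k : ℕ), IsGap n X i k → Even k)
    (hXZ : ∀ (a : ZMod n) (l : ℕ), IsABGap n X Z a l → Even l)
    (i : ZMod n) (L : ℕ) (hLn : L < n) (hiX : i ∈ X)
    (hZend : i + (L : ZMod n) ∈ Z)
    (hZonly : ∀ m : ℕ, m ≤ L → i + (m : ZMod n) ∈ Z → m = L) :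
    edgeCount n X i L % 2 = L % 2 := by
  have hex : ∃ r, r ≤ L ∧ i + ((L - r : ℕ) : ZMod n) ∈ X :=
    ⟨L, le_rfl, by simpa using hiX⟩
  set p := Nat.find hex with hp
  obtain ⟨hpL, hpX⟩ : p ≤ L ∧ i + ((L - p : ℕ) : ZMod n) ∈ X := Nat.find_spec hex
  have hmin : ∀ r, r < p → i + ((L - r : ℕ) : ZMod n) ∉ X := by
    intro r hr hrX
    exact Nat.find_min hex hr ⟨by omega, hrX⟩
  have hpev : Even p := by
    rcases Nat.eq_zero_or_pos p with hp0 | hp0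
    · rw [hp0]; exact Even.zero
    · refine hXZ (i + ((L - p : ℕ) : ZMod n)) p ⟨by omega, Or.inl ⟨hpX, ?_, ?_, ?_⟩⟩
      · rw [cast_add_nat i (L - p) p L (by omega)]; exact hZend
      · intro m hm hmX
        by_contra hm0
        have h1 : 0 < m := by omega
        rw [cast_add_nat i (L - p) m (L - (p - m)) (by omega)] at hmX
        exact hmin (p - m) (by omega) hmX
      · intro m hm hmZ
        rw [cast_add_nat i (L - p) m (L - p + m) rfl] at hmZ
        have := hZonly (L - p + m) (by omega) hmZ
        omega
  have hsplit : edgeCount n X i L =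
      edgeCount n X i (L - p) + edgeCount n X (i + ((L - p : ℕ) : ZMod n)) p := by
    have h3 := edgeCount_add n X i (L - p) p
    rwa [Nat.sub_add_cancel hpL] at h3
  have hzero : edgeCount n X (i + ((L - p : ℕ) : ZMod n)) p = 0 := by
    unfold edgeCount
    rw [Finset.card_eq_zero, Finset.filter_eq_empty_iff]
    intro m hm
    rw [Finset.mem_range] at hm
    intro hc
    have := hc.2
    rw [cast_add_nat' (i := i) (L - p) m (L - (p - m - 1)) (by omega)] at this
    exact hmin (p - m - 1) (by omega) this
  have hfirst : (L - p) % 2 = edgeCount n X i (L - p) % 2 :=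
    parity n X hX (L - p) i (by omega) hiX hpX
  obtain ⟨t, ht⟩ := hpev
  omega

lemma tail_parity_first {n : ℕ} {X Z : Set (ZMod n)}
    (hX : ∀ (i : ZMod n) (k : ℕ), IsGap n X i k → Even k)
    (hXZ : ∀ (a : ZMod n) (l : ℕ), IsABGap n X Z a l → Even l)
    (i : ZMod n) (L : ℕ) (hLn : L < n) (hiZ : i ∈ Z)
    (hXend : i + (L : ZMod n) ∈ X)
    (hZonly : ∀ m : ℕ, m ≤ L → i + (m : ZMod n) ∈ Z → m = 0) :
    edgeCount n X i L % 2 = L % 2 := by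
  have hex : ∃ r, r ≤ L ∧ i + (r : ZMod n) ∈ X := ⟨L, le_rfl, hXend⟩
  set p := Nat.find hex with hp
  obtain ⟨hpL, hpX⟩ : p ≤ L ∧ i + (p : ZMod n) ∈ X := Nat.find_spec hex
  have hmin : ∀ r, r < p → i + (r : ZMod n) ∉ X := by
    intro r hr hrX
    exact Nat.find_min hex hr ⟨by omega, hrX⟩
  have hpev : Even p := by
    rcases Nat.eq_zero_or_pos p with hp0 | hp0
    · rw [hp0]; exact Even.zero
    · refine hXZ i p ⟨by omega, Or.inr ⟨hiZ, hpX, ?_, ?_⟩⟩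
      · exact fun m hm hmZ => hZonly m (by omega) hmZ
      · intro m hm hmX
        by_contra hmp
        exact hmin m (by omega) hmX
  have hsplit : edgeCount n X i L =
      edgeCount n X i p + edgeCount n X (i + (p : ZMod n)) (L - p) := by
    have h3 := edgeCount_add n X i p (L - p)
    rwa [Nat.add_sub_cancel' hpL] at h3
  have hzero : edgeCount n X i p = 0 := by
    unfold edgeCount
    rw [Finset.card_eq_zero, Finset.filter_eq_empty_iff]
    intro m hm
    rw [Finset.mem_range] at hm
    exact fun hc => hmin m hm hc.1
  have hlast : (i + (p : ZMod n)) + ((L - p : ℕ) : ZMod n) ∈ X := by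
    rw [cast_add_nat i p (L - p) L (by omega)]; exact hXend
  have hsecond : (L - p) % 2 = edgeCount n X (i + (p : ZMod n)) (L - p) % 2 :=
    parity n X hX (L - p) _ (by omega) hpX hlast
  obtain ⟨t, ht⟩ := hpev
  omega

lemma normal_nonempty {n : ℕ} (hodd : Odd n) {X : Set (ZMod n)} (hX : IsNormal n X) :
    X.Nonempty := by
  rw [Set.nonempty_iff_ne_empty]
  intro h
  have := hX.1 h
  rw [Nat.even_iff] at this
  rw [Nat.odd_iff] at hodd
  omega

lemma inter_two {n : ℕ} (hn : 3 ≤ n) (hodd : Odd n) {X Y : Set (ZMod n)}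
    (hX : IsNormal n X) (hY : IsNormal n Y)
    (hXY : ∀ (a : ZMod n) (l : ℕ), IsABGap n X Y a l → Even l) :
    IsNormal n (X ∩ Y) := by
  have hW := union2_gap hX.2 hY.2 hXY
  have hcast0 : ∀ j : ZMod n, j + ((0 : ℕ) : ZMod n) = j := by intro j; simp
  constructor
  · intro hempty
    exfalso
    obtain ⟨x, hx⟩ := normal_nonempty hodd hX
    obtain ⟨y, hy⟩ := normal_nonempty hodd hY
    have hxn : x + ((n : ℕ) : ZMod n) = x := by rw [ZMod.natCast_self, add_zero]
    have hparW : n % 2 = edgeCount n (X ∪ Y) x n % 2 := by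
      refine parity n (X ∪ Y) hW n x le_rfl (Or.inl hx) ?_
      rw [hxn]; exact Or.inl hx
    have hsum : edgeCount n (X ∪ Y) x n = edgeCount n X x n + edgeCount n Y x n := by
      refine edgeCount_union n (X ∪ Y) X Y x n (fun m hm => ?_) (fun m hm hc => ?_)
      · constructor
        · intro h; exact pair_common hn hXY h.1 h.2
        · rintro (⟨h1, h2⟩ | ⟨h1, h2⟩)
          exacts [⟨Or.inl h1, Or.inl h2⟩, ⟨Or.inr h1, Or.inr h2⟩]
      · have : x + (m : ZMod n) ∈ X ∩ Y := ⟨hc.1.1, hc.2.1⟩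
        rw [hempty] at this
        exact this
    have hparX : n % 2 = edgeCount n X x n % 2 := by
      refine parity n X hX.2 n x le_rfl hx ?_
      rw [hxn]; exact hx
    have hrot : edgeCount n Y x n = edgeCount n Y y n := edgeCount_rotate n (by omega) Y x y
    have hparY : n % 2 = edgeCount n Y y n % 2 := by
      refine parity n Y hY.2 n y le_rfl hy ?_
      rw [ZMod.natCast_self, add_zero]; exact hy
    rw [Nat.odd_iff] at hodd
    omega
  · rintro i k ⟨hk2, hkn, ⟨hiX, hiY⟩, ⟨hikX, hikY⟩, hint⟩
    have hparW : k % 2 = edgeCount n (X ∪ Y) i k % 2 :=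
      parity n (X ∪ Y) hW k i hkn (Or.inl hiX) (Or.inl hikX)
    have hsum : edgeCount n (X ∪ Y) i k = edgeCount n X i k + edgeCount n Y i k := by
      refine edgeCount_union n (X ∪ Y) X Y i k (fun m hm => ?_) (fun m hm hc => ?_)
      · constructor
        · intro h; exact pair_common hn hXY h.1 h.2
        · rintro (⟨h1, h2⟩ | ⟨h1, h2⟩)
          exacts [⟨Or.inl h1, Or.inl h2⟩, ⟨Or.inr h1, Or.inr h2⟩]
      · rcases Nat.eq_zero_or_pos m with hm0 | hm0
        · have h1 : i + (m : ZMod n) + 1 = i + ((1 : ℕ) : ZMod n) := by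
            rw [hm0]; push_cast; ring
          rw [h1] at hc
          exact hint 1 (by omega) (by omega) ⟨hc.1.2, hc.2.2⟩
        · exact hint m hm0 hm ⟨hc.1.1, hc.2.1⟩
    have hparX : k % 2 = edgeCount n X i k % 2 := parity n X hX.2 k i hkn hiX hikX
    have hparY : k % 2 = edgeCount n Y i k % 2 := parity n Y hY.2 k i hkn hiY hikY
    rw [Nat.even_iff]
    omega

lemma gap_prop {n : ℕ} (hn : 3 ≤ n) {X Y Z : Set (ZMod n)}
    (hX : ∀ (i : ZMod n) (k : ℕ), IsGap n X i k → Even k)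
    (hY : ∀ (i : ZMod n) (k : ℕ), IsGap n Y i k → Even k)
    (hZ : ∀ (i : ZMod n) (k : ℕ), IsGap n Z i k → Even k)
    (hXY : ∀ (a : ZMod n) (l : ℕ), IsABGap n X Y a l → Even l)
    (hXZ : ∀ (a : ZMod n) (l : ℕ), IsABGap n X Z a l → Even l)
    (hYZ : ∀ (a : ZMod n) (l : ℕ), IsABGap n Y Z a l → Even l) :
    ∀ (a : ZMod n) (L : ℕ), IsABGap n (X ∩ Y) Z a L → Even L := by
  rintro a L ⟨hLn, hcase⟩
  rcases Nat.eq_zero_or_pos L with hL0 | hL0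
  · rw [hL0]; exact Even.zero
  have hWgap := union3_gap hX hY hZ hXY hXZ hYZ
  rcases hcase with ⟨haXY, hZend, hXYonly, hZonly⟩ | ⟨haZ, hXYend, hZonly, hXYonly⟩
  · -- a ∈ X ∩ Y, a + L ∈ Z
    have hparW : L % 2 = edgeCount n (X ∪ Y ∪ Z) a L % 2 :=
      parity n _ hWgap L a hLn.le (Or.inl (Or.inl haXY.1)) (Or.inr hZend)
    have hsum : edgeCount n (X ∪ Y ∪ Z) a L = edgeCount n X a L + edgeCount n Y a L := by
      refine edgeCount_union n _ X Y a L (fun m hm => ?_) (fun m hm hc => ?_)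
      · constructor
        · intro h
          rcases triple_common hn hXY hXZ hYZ h.1 h.2 with h' | h' | h'
          · exact Or.inl h'
          · exact Or.inr h'
          · exact absurd (hZonly m hm.le h'.1) (by omega)
        · rintro (⟨h1, h2⟩ | ⟨h1, h2⟩)
          exacts [⟨Or.inl (Or.inl h1), Or.inl (Or.inl h2)⟩,
            ⟨Or.inl (Or.inr h1), Or.inl (Or.inr h2)⟩]
      · have hm0 : m = 0 := hXYonly m hm.le ⟨hc.1.1, hc.2.1⟩
        have h1 : a + (m : ZMod n) + 1 = a + ((1 : ℕ) : ZMod n) := by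
          rw [hm0]; push_cast; ring
        rw [h1] at hc
        have := hXYonly 1 (by omega) ⟨hc.1.2, hc.2.2⟩
        omega
    have hparX : edgeCount n X a L % 2 = L % 2 :=
      tail_parity_last hX hXZ a L hLn haXY.1 hZend hZonly
    have hparY : edgeCount n Y a L % 2 = L % 2 :=
      tail_parity_last hY hYZ a L hLn haXY.2 hZend hZonly
    rw [Nat.even_iff]
    omega
  · -- a ∈ Z, a + L ∈ X ∩ Y
    have hparW : L % 2 = edgeCount n (X ∪ Y ∪ Z) a L % 2 :=
      parity n _ hWgap L a hLn.le (Or.inr haZ) (Or.inl (Or.inl hXYend.1))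
    have hsum : edgeCount n (X ∪ Y ∪ Z) a L = edgeCount n X a L + edgeCount n Y a L := by
      refine edgeCount_union n _ X Y a L (fun m hm => ?_) (fun m hm hc => ?_)
      · constructor
        · intro h
          rcases triple_common hn hXY hXZ hYZ h.1 h.2 with h' | h' | h'
          · exact Or.inl h'
          · exact Or.inr h'
          · exfalso
            have h1 : a + (m : ZMod n) + 1 = a + ((m + 1 : ℕ) : ZMod n) := by
              push_cast; ring
            rw [h1] at h'
            have := hZonly (m + 1) (by omega) h'.2
            omega
        · rintro (⟨h1, h2⟩ | ⟨h1, h2⟩)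
          exacts [⟨Or.inl (Or.inl h1), Or.inl (Or.inl h2)⟩,
            ⟨Or.inl (Or.inr h1), Or.inl (Or.inr h2)⟩]
      · have := hXYonly m hm.le ⟨hc.1.1, hc.2.1⟩
        omega
    have hparX : edgeCount n X a L % 2 = L % 2 :=
      tail_parity_first hX hXZ a L hLn haZ hXYend.1 hZonly
    have hparY : edgeCount n Y a L % 2 = L % 2 :=
      tail_parity_first hY hYZ a L hLn haZ hXYend.2 hZonly
    rw [Nat.even_iff]
    omega

lemma main_aux (n : ℕ) (hn : 3 ≤ n) (hodd : Odd n) :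
    ∀ k : ℕ, ∀ A : Fin (k + 1) → Set (ZMod n), (∀ i, IsNormal n (A i)) →
      (∀ i j : Fin (k + 1), i < j →
        ∀ (a : ZMod n) (l : ℕ), IsABGap n (A i) (A j) a l → Even l) →
      IsNormal n (⋂ i, A i) ∧
        ∀ C : Set (ZMod n), IsNormal n C →
          (∀ i : Fin (k + 1), ∀ (a : ZMod n) (l : ℕ), IsABGap n (A i) C a l → Even l) →
          ∀ (a : ZMod n) (l : ℕ), IsABGap n (⋂ i, A i) C a l → Even l := by
  intro k
  induction k with
  | zero =>
    intro A hnorm hgaps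
    have hset : (⋂ i, A i) = A 0 := by
      ext x
      simp only [Set.mem_iInter]
      exact ⟨fun h => h 0, fun h i => by rw [Fin.fin_one_eq_zero i]; exact h⟩
    rw [hset]
    exact ⟨hnorm 0, fun C _ hgC => hgC 0⟩
  | succ k IH =>
    intro A hnorm hgaps
    set A' : Fin (k + 1) → Set (ZMod n) := fun i => A i.castSucc with hA'
    obtain ⟨hBnorm, hBgap⟩ := IH A' (fun i => hnorm _)
      (fun i j hij => hgaps i.castSucc j.castSucc (by simpa using hij))
    set B := ⋂ i, A' i with hB
    have hlastnorm : IsNormal n (A (Fin.last (k + 1))) := hnorm _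
    have hBl : ∀ (a : ZMod n) (l : ℕ),
        IsABGap n B (A (Fin.last (k + 1))) a l → Even l :=
      hBgap _ hlastnorm
        (fun i => hgaps i.castSucc (Fin.last (k + 1)) (Fin.castSucc_lt_last i))
    have hset : (⋂ i, A i) = B ∩ A (Fin.last (k + 1)) := by
      ext x
      simp only [hB, hA', Set.mem_iInter, Set.mem_inter_iff]
      constructor
      · exact fun h => ⟨fun i => h _, h _⟩
      · rintro ⟨h1, h2⟩ i
        rcases Fin.eq_castSucc_or_eq_last i with ⟨j, rfl⟩ | rfl
        · exact h1 j
        · exact h2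
    constructor
    · rw [hset]
      exact inter_two hn hodd hBnorm hlastnorm hBl
    · intro C hC hgC a l hgap
      rw [hset] at hgap
      exact gap_prop hn hBnorm.2 hlastnorm.2 hC.2 hBl
        (hBgap C hC (fun i => hgC i.castSucc)) (hgC (Fin.last (k + 1))) a l hgap


/-- if `A₁, …, A_k` are normal sets in an odd cycle (on `ZMod n`) and
for all `i < j` every `(Aᵢ,Aⱼ)`-gap is even, then `A₁ ∩ ⋯ ∩ A_k` is normal. -/
theorem inter_normal (n : ℕ) (hn : 3 ≤ n) (hodd : Odd n) (k : ℕ) (hk : 1 ≤ k)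
    (A : Fin k → Set (ZMod n)) (hnorm : ∀ i, IsNormal n (A i))
    (hgaps : ∀ i j : Fin k, i < j →
      ∀ (a : ZMod n) (l : ℕ), IsABGap n (A i) (A j) a l → Even l) :
    IsNormal n (⋂ i, A i) := by
  obtain ⟨k', rfl⟩ : ∃ k', k = k' + 1 := ⟨k - 1, by omega⟩
  exact (main_aux n hn hodd k' A hnorm hgaps).1
end
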